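/- arXiv:2406.09232 — 2 statements merged into one kernel-verified Lean document; each statement's English description precedes it below -/
import Mathlib

section
/- Let Ω and V be finite sets, P a probability measure on Ω^V, ν a probability distribution on the subsets of V (a random subset 𝒰 independent of the configuration), and ε ∈ (0,1). Suppose there exists f ∈ L²(Ω^V, P) with Var_P(f) > 0 and E[clue(f|𝒰)] ≥ 1 − ε²/8. Then there exists an event E ⊆ Ω^V with 0 < P(E) ≤ 1/2 such that E[clue(1_E|𝒰)] ≥ 1 − ε, where 1_E is the indicator function of E. (Hence near-full expected clue for some real-valued function yields near-full expected clue for a non-degenerate Boolean function.) -/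
open Finset

namespace SR

/-- `p` is a probability mass function on the finite type `X`. -/
def IsPMF {X : Type*} [Fintype X] (p : X → ℝ) : Prop :=
  (∀ x, 0 ≤ p x) ∧ ∑ x : X, p x = 1

/-- Expectation of `f` under the pmf `p`. -/
noncomputable def pexp {X : Type*} [Fintype X] (p f : X → ℝ) : ℝ := ∑ x : X, p x * f x

/-- Variance of `f` under the pmf `p`. -/
noncomputable def pvar {X : Type*} [Fintype X] (p f : X → ℝ) : ℝ :=
  ∑ x : X, p x * (f x - pexp p f) ^ 2

/-- Conditional expectation of `f` given the coordinates in `U`. -/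
noncomputable def cexp {V : Type*} [Fintype V] [DecidableEq V]
    {Ω : Type*} [Fintype Ω] [DecidableEq Ω]
    (p : (V → Ω) → ℝ) (U : Finset V) (f : (V → Ω) → ℝ) : (V → Ω) → ℝ :=
  fun ω =>
    (∑ ω' ∈ univ.filter (fun ω' : V → Ω => ∀ v ∈ U, ω' v = ω v), p ω' * f ω') /
      ∑ ω' ∈ univ.filter (fun ω' : V → Ω => ∀ v ∈ U, ω' v = ω v), p ω'

/-- `clue(f|U) = Var(E[f|F_U])/Var(f)`, with the convention that it is `0` when `Var f = 0`. -/
noncomputable def clue {V : Type*} [Fintype V] [DecidableEq V]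
    {Ω : Type*} [Fintype Ω] [DecidableEq Ω]
    (p : (V → Ω) → ℝ) (f : (V → Ω) → ℝ) (U : Finset V) : ℝ :=
  if pvar p f = 0 then 0 else pvar p (cexp p U f) / pvar p f

/-- `ν` is a probability distribution on the subsets of `V` (a random subset of `V`). -/
def IsSubsetDist {V : Type*} [Fintype V] (ν : Finset V → ℝ) : Prop :=
  (∀ S, 0 ≤ ν S) ∧ ∑ S : Finset V, ν S = 1

/-- Expected clue `E[clue(f|𝒰)]` for a random subset with distribution `ν`. -/
noncomputable def eClue {V : Type*} [Fintype V] [DecidableEq V]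
    {Ω : Type*} [Fintype Ω] [DecidableEq Ω]
    (p : (V → Ω) → ℝ) (f : (V → Ω) → ℝ) (ν : Finset V → ℝ) : ℝ :=
  ∑ S : Finset V, ν S * clue p f S

/-- The revealment `δ(𝒰) = max_v P[v ∈ 𝒰]` of a random subset with distribution `ν`. -/
noncomputable def revealment {V : Type*} [Fintype V] [DecidableEq V] (ν : Finset V → ℝ) : ℝ :=
  sSup (Set.range fun v : V => ∑ S ∈ univ.filter (fun S : Finset V => v ∈ S), ν S)

/-- The spin `±1 ∈ ℝ` associated to a Boolean value. -/
noncomputable def spinR (b : Bool) : ℝ := if b then 1 else -1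

end SR

open Finset SR

set_option linter.unusedSectionVars false

namespace SRP

/-! ### Sign/abs helper lemmas for ψ(u) = u * |u| -/

lemma psi_mono {a b : ℝ} (h : a < b) : a * |a| < b * |b| := by
  rcases le_or_gt 0 a with ha | ha
  · rw [abs_of_nonneg ha, abs_of_nonneg (le_of_lt (lt_of_le_of_lt ha h))]
    nlinarith
  · rcases le_or_gt 0 b with hb | hb
    · have h1 : a * |a| < 0 := by rw [abs_of_neg ha]; nlinarith
      have h2 : 0 ≤ b * |b| := by rw [abs_of_nonneg hb]; nlinarith
      linarith
    · rw [abs_of_neg ha, abs_of_neg hb]; nlinarith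

lemma psi_mono_le {a b : ℝ} (h : a ≤ b) : a * |a| ≤ b * |b| := by
  rcases eq_or_lt_of_le h with rfl | h
  · exact le_rfl
  · exact (psi_mono h).le

lemma psi_diff_le (a b : ℝ) : abs (a * |a| - b * |b|) ≤ |a - b| * (|a| + |b|) := by
  rcases abs_cases a with ⟨ha, ha'⟩ | ⟨ha, ha'⟩ <;>
  rcases abs_cases b with ⟨hb, hb'⟩ | ⟨hb, hb'⟩ <;>
  rcases abs_cases (a - b) with ⟨hab, hab'⟩ | ⟨hab, hab'⟩ <;>
  rw [ha, hb, hab] <;>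
  [skip; skip; skip; skip; skip; skip; skip; skip] <;>
  first
  | (rw [abs_of_nonneg (by nlinarith : (0:ℝ) ≤ _)]; nlinarith)
  | (rw [abs_of_nonpos (by nlinarith : _ ≤ (0:ℝ))]; nlinarith)
  | (rcases abs_cases (a * a - b * b) with ⟨hq, hq'⟩ | ⟨hq, hq'⟩ <;> rw [hq] <;> nlinarith)
  | (rcases abs_cases (a * a - b * -b) with ⟨hq, hq'⟩ | ⟨hq, hq'⟩ <;> rw [hq] <;> nlinarith)
  | (rcases abs_cases (a * -a - b * b) with ⟨hq, hq'⟩ | ⟨hq, hq'⟩ <;> rw [hq] <;> nlinarith)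
  | (rcases abs_cases (a * -a - b * -b) with ⟨hq, hq'⟩ | ⟨hq, hq'⟩ <;> rw [hq] <;> nlinarith)

lemma psi_diff_ge (a b : ℝ) (h : a * b ≤ 0) : a^2 + b^2 ≤ abs (a * |a| - b * |b|) := by
  rcases lt_trichotomy b 0 with hb | hb | hb
  · have ha : 0 ≤ a := by nlinarith
    rw [abs_of_nonneg ha, abs_of_nonpos hb.le,
      abs_of_nonneg (by nlinarith : (0:ℝ) ≤ a * a - b * -b)]
    nlinarith
  · subst hb
    rcases abs_cases a with ⟨ha, _⟩ | ⟨ha, _⟩ <;> rw [ha] <;>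
      [rw [abs_of_nonneg (by nlinarith : (0:ℝ) ≤ a * a - 0 * |(0:ℝ)|)];
       rw [abs_of_nonpos (by nlinarith : a * -a - 0 * |(0:ℝ)| ≤ (0:ℝ))]] <;> nlinarith
  · have ha : a ≤ 0 := by nlinarith
    rw [abs_of_nonpos ha, abs_of_nonneg hb.le,
      abs_of_nonpos (by nlinarith : a * -a - b * b ≤ (0:ℝ))]
    nlinarith


section CE

variable {X : Type*} [Fintype X] {B : Type*} [Fintype B] [DecidableEq B]

/-- Fiber of `π` over `b`. -/
def fib (π : X → B) (b : B) : Finset X := univ.filter (fun x => π x = b)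

/-- Mass of a fiber. -/
noncomputable def fm (p : X → ℝ) (π : X → B) (b : B) : ℝ := ∑ x ∈ fib π b, p x

/-- `p`-weighted sum of `f` over a fiber. -/
noncomputable def fsum (p : X → ℝ) (π : X → B) (f : X → ℝ) (b : B) : ℝ :=
  ∑ x ∈ fib π b, p x * f x

/-- Conditional expectation w.r.t. the fibers of `π`. -/
noncomputable def ce (p : X → ℝ) (π : X → B) (f : X → ℝ) (x : X) : ℝ :=
  fsum p π f (π x) / fm p π (π x)

variable {p : X → ℝ} {π : X → B}

lemma mem_fib {b : B} {x : X} : x ∈ fib π b ↔ π x = b := by simp [fib]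

lemma self_mem_fib (x : X) : x ∈ fib π (π x) := by simp [fib]

lemma sum_fib (F : X → ℝ) : (∑ b : B, ∑ x ∈ fib π b, F x) = ∑ x : X, F x :=
  Finset.sum_fiberwise_of_maps_to (fun x _ => mem_univ _) F

lemma fm_nonneg (hp : ∀ x, 0 ≤ p x) (b : B) : 0 ≤ fm p π b :=
  Finset.sum_nonneg fun x _ => hp x

lemma p_eq_zero_of_fm_eq_zero (hp : ∀ x, 0 ≤ p x) {b : B} (hb : fm p π b = 0)
    {x : X} (hx : x ∈ fib π b) : p x = 0 :=
  (Finset.sum_eq_zero_iff_of_nonneg fun y _ => hp y).1 hb x hx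

lemma fm_pos_of_p_pos (hp : ∀ x, 0 ≤ p x) {x : X} (hx : p x ≠ 0) : 0 < fm p π (π x) := by
  rcases (fm_nonneg hp (π := π) (π x)).lt_or_eq with h | h
  · exact h
  · exact absurd (p_eq_zero_of_fm_eq_zero hp h.symm (self_mem_fib x)) hx

lemma ce_eq_on_fiber {b : B} {x : X} (hx : x ∈ fib π b) (f : X → ℝ) :
    ce p π f x = fsum p π f b / fm p π b := by
  rw [ce, mem_fib.1 hx]

/-- Sum over a fiber of `p * ce f` equals the fiber sum of `p * f`. -/
lemma sum_fib_p_mul_ce (hp : ∀ x, 0 ≤ p x) (f : X → ℝ) (b : B) :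
    ∑ x ∈ fib π b, p x * ce p π f x = fsum p π f b := by
  rcases eq_or_ne (fm p π b) 0 with h | h
  · have hl : ∑ x ∈ fib π b, p x * ce p π f x = 0 :=
      Finset.sum_eq_zero fun x hx => by rw [p_eq_zero_of_fm_eq_zero hp h hx, zero_mul]
    have hr : fsum p π f b = 0 :=
      Finset.sum_eq_zero fun x hx => by rw [p_eq_zero_of_fm_eq_zero hp h hx, zero_mul]
    rw [hl, hr]
  · calc ∑ x ∈ fib π b, p x * ce p π f x
        = ∑ x ∈ fib π b, p x * (fsum p π f b / fm p π b) :=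
          Finset.sum_congr rfl fun x hx => by rw [ce_eq_on_fiber hx]
      _ = (∑ x ∈ fib π b, p x) * (fsum p π f b / fm p π b) := by rw [Finset.sum_mul]
      _ = fsum p π f b := by rw [← fm]; field_simp

/-- Tower property. -/
lemma tower (hp : ∀ x, 0 ≤ p x) (f : X → ℝ) :
    (∑ x : X, p x * ce p π f x) = ∑ x : X, p x * f x := by
  rw [← sum_fib (π := π) (fun x => p x * ce p π f x), ← sum_fib (π := π) (fun x => p x * f x)]
  exact Finset.sum_congr rfl fun b _ => sum_fib_p_mul_ce hp f b

/-- `E[(ce f)²] = E[f ⬝ ce f]`. -/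
lemma ce_sq (hp : ∀ x, 0 ≤ p x) (f : X → ℝ) :
    (∑ x : X, p x * (ce p π f x)^2) = ∑ x : X, p x * (f x * ce p π f x) := by
  rw [← sum_fib (π := π) (fun x => p x * (ce p π f x)^2),
    ← sum_fib (π := π) (fun x => p x * (f x * ce p π f x))]
  refine Finset.sum_congr rfl fun b _ => ?_
  have h1 : ∑ x ∈ fib π b, p x * (ce p π f x)^2
      = (fsum p π f b / fm p π b) * ∑ x ∈ fib π b, p x * ce p π f x := by
    rw [Finset.mul_sum]
    refine Finset.sum_congr rfl fun x hx => ?_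
    rw [ce_eq_on_fiber hx]; ring
  have h2 : ∑ x ∈ fib π b, p x * (f x * ce p π f x)
      = (fsum p π f b / fm p π b) * ∑ x ∈ fib π b, p x * f x := by
    rw [Finset.mul_sum]
    refine Finset.sum_congr rfl fun x hx => ?_
    rw [ce_eq_on_fiber hx]; ring
  rw [h1, h2, sum_fib_p_mul_ce hp f b, ← fsum]

end CE


section PV

variable {X : Type*} [Fintype X] {p : X → ℝ}

lemma pexp_congr_support (g h : X → ℝ) (hgh : ∀ x, p x ≠ 0 → g x = h x) :
    pexp p g = pexp p h := by
  refine Finset.sum_congr rfl fun x _ => ?_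
  rcases eq_or_ne (p x) 0 with hx | hx
  · rw [hx, zero_mul, zero_mul]
  · rw [hgh x hx]

lemma pvar_congr_support (g h : X → ℝ) (hgh : ∀ x, p x ≠ 0 → g x = h x) :
    pvar p g = pvar p h := by
  unfold pvar
  rw [pexp_congr_support g h hgh]
  refine Finset.sum_congr rfl fun x _ => ?_
  rcases eq_or_ne (p x) 0 with hx | hx
  · rw [hx, zero_mul, zero_mul]
  · rw [hgh x hx]

lemma pvar_nonneg (hp : ∀ x, 0 ≤ p x) (f : X → ℝ) : 0 ≤ pvar p f :=
  Finset.sum_nonneg fun x _ => mul_nonneg (hp x) (sq_nonneg _)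

lemma sum_sq_expand (f g : X → ℝ) :
    (∑ x : X, p x * (f x - g x)^2)
      = (∑ x : X, p x * f x ^ 2) - 2 * (∑ x : X, p x * (f x * g x))
        + ∑ x : X, p x * g x ^ 2 := by
  rw [Finset.sum_congr rfl (fun x (_ : x ∈ univ) => by
      ring : ∀ x ∈ univ, p x * (f x - g x)^2
        = p x * f x ^ 2 - 2 * (p x * (f x * g x)) + p x * g x ^ 2)]
  rw [Finset.sum_add_distrib, Finset.sum_sub_distrib, Finset.mul_sum]

lemma pexp_const_mul_sub (h1 : ∑ x : X, p x = 1) (c : ℝ) (g : X → ℝ) :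
    pexp p (fun x => c - g x) = c - pexp p g := by
  unfold pexp
  calc (∑ x : X, p x * (c - g x)) = ∑ x : X, (p x * c - p x * g x) :=
        Finset.sum_congr rfl fun x _ => by ring
    _ = (∑ x : X, p x * c) - ∑ x : X, p x * g x := Finset.sum_sub_distrib _ _
    _ = c - ∑ x : X, p x * g x := by rw [← Finset.sum_mul, h1, one_mul]

lemma pvar_const_sub (h1 : ∑ x : X, p x = 1) (c : ℝ) (g : X → ℝ) :
    pvar p (fun x => c - g x) = pvar p g := by
  unfold pvar
  rw [pexp_const_mul_sub h1 c g]
  refine Finset.sum_congr rfl fun x _ => by ring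

/-- `pvar` via second moment. -/
lemma pvar_eq_sub (h1 : ∑ x : X, p x = 1) (f : X → ℝ) :
    pvar p f = (∑ x : X, p x * f x ^ 2) - (pexp p f)^2 := by
  unfold pvar
  have h2 : (∑ x : X, p x * (f x * pexp p f)) = (pexp p f)^2 := by
    calc (∑ x : X, p x * (f x * pexp p f)) = (∑ x : X, p x * f x) * pexp p f := by
          rw [Finset.sum_mul]; exact Finset.sum_congr rfl fun x _ => by ring
      _ = (pexp p f)^2 := by rw [← pexp]; ring
  have h3 : (∑ x : X, p x * (pexp p f) ^ 2) = (pexp p f)^2 := by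
    rw [← Finset.sum_mul, h1, one_mul]
  rw [sum_sq_expand f (fun _ => pexp p f), h2, h3]
  ring

/-- second moment about `c` is at least the variance. -/
lemma pvar_le_msq (h1 : ∑ x : X, p x = 1) (f : X → ℝ) (c : ℝ) :
    pvar p f ≤ ∑ x : X, p x * (f x - c)^2 := by
  have h2 : (∑ x : X, p x * (f x * c)) = (pexp p f) * c := by
    calc (∑ x : X, p x * (f x * c)) = (∑ x : X, p x * f x) * c := by
          rw [Finset.sum_mul]; exact Finset.sum_congr rfl fun x _ => by ring
      _ = _ := by rw [← pexp]
  have h3 : (∑ x : X, p x * c ^ 2) = c^2 := by rw [← Finset.sum_mul, h1, one_mul]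
  rw [sum_sq_expand f (fun _ => c), h2, h3, pvar_eq_sub h1 f]
  nlinarith [sq_nonneg (pexp p f - c)]

variable {B : Type*} [Fintype B] [DecidableEq B]

/-- Pythagoras / variance decomposition for conditional expectation. -/
lemma pvar_ce_eq (hp : ∀ x, 0 ≤ p x) (h1 : ∑ x : X, p x = 1) (π : X → B) (f : X → ℝ) :
    pvar p (ce p π f) = pvar p f - ∑ x : X, p x * (f x - ce p π f x)^2 := by
  have ht : pexp p (ce p π f) = pexp p f := tower hp f
  have hsq := ce_sq (π := π) hp f
  rw [pvar_eq_sub h1, pvar_eq_sub h1, sum_sq_expand f (ce p π f), ht, hsq]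
  ring

end PV

section Grid

variable (G : Finset ℝ) (φ : ℝ → ℝ)

/-- next grid point above `a` (or `a` itself if there is none). -/
noncomputable def na (a : ℝ) : ℝ :=
  if h : (G.filter (fun b => a < b)).Nonempty then (G.filter (fun b => a < b)).min' h else a

/-- φ-width of the grid gap starting at `a`. -/
noncomputable def wt (a : ℝ) : ℝ := φ (na G a) - φ a

variable {G}

lemma na_gt {a t : ℝ} (ht : t ∈ G) (hat : a < t) :
    a < na G a ∧ na G a ∈ G ∧ na G a ≤ t := by
  have hne : (G.filter (fun b => a < b)).Nonempty := ⟨t, mem_filter.2 ⟨ht, hat⟩⟩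
  rw [na, dif_pos hne]
  have hmem := (G.filter (fun b => a < b)).min'_mem hne
  rw [mem_filter] at hmem
  exact ⟨hmem.2, hmem.1, Finset.min'_le _ t (mem_filter.2 ⟨ht, hat⟩)⟩

lemma na_min {a c : ℝ} (hc : c ∈ G) (hac : a < c) : na G a ≤ c := by
  have hne : (G.filter (fun b => a < b)).Nonempty := ⟨c, mem_filter.2 ⟨hc, hac⟩⟩
  rw [na, dif_pos hne]
  exact Finset.min'_le _ c (mem_filter.2 ⟨hc, hac⟩)

lemma wt_nonneg (hφ : Monotone φ) (a : ℝ) : 0 ≤ wt G φ a := by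
  rw [wt]
  rcases em ((G.filter (fun b => a < b)).Nonempty) with h | h
  · have hm := (G.filter (fun b => a < b)).min'_mem h
    rw [mem_filter] at hm
    rw [na, dif_pos h]
    exact sub_nonneg.2 (hφ hm.2.le)
  · rw [na, dif_neg h]; simp

lemma tele {t : ℝ} (ht : t ∈ G) : ∀ (n : ℕ) (s : ℝ), s ∈ G → s ≤ t →
    (G.filter (fun a => s ≤ a ∧ a < t)).card = n →
    (∑ a ∈ G.filter (fun a => s ≤ a ∧ a < t), wt G φ a) = φ t - φ s := by
  intro n
  induction n using Nat.strong_induction_on with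
  | _ n ih =>
    intro s hs hst hcard
    rcases eq_or_lt_of_le hst with rfl | hlt
    · have hempty : G.filter (fun a => s ≤ a ∧ a < s) = ∅ := by
        refine Finset.filter_false_of_mem fun a _ => ?_
        rintro ⟨h1, h2⟩; exact absurd (lt_of_le_of_lt h1 h2) (lt_irrefl s)
      rw [hempty, Finset.sum_empty, sub_self]
    · obtain ⟨hsu, huG, hut⟩ := na_gt ht hlt
      have hkey : G.filter (fun a => s ≤ a ∧ a < t)
          = insert s (G.filter (fun a => na G s ≤ a ∧ a < t)) := by
        ext a
        simp only [Finset.mem_insert, mem_filter]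
        constructor
        · rintro ⟨haG, h1, h2⟩
          rcases eq_or_lt_of_le h1 with rfl | h1'
          · exact Or.inl rfl
          · exact Or.inr ⟨haG, na_min haG h1', h2⟩
        · rintro (rfl | ⟨haG, h1, h2⟩)
          · exact ⟨hs, le_rfl, hlt⟩
          · exact ⟨haG, le_trans (le_of_lt hsu) h1, h2⟩
      have hnotmem : s ∉ G.filter (fun a => na G s ≤ a ∧ a < t) := by
        rw [mem_filter]; rintro ⟨-, h1, -⟩; exact absurd (lt_of_lt_of_le hsu h1) (lt_irrefl s)
      have hcard' : (G.filter (fun a => na G s ≤ a ∧ a < t)).card < n := by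
        rw [← hcard, hkey, Finset.card_insert_of_notMem hnotmem]; omega
      rw [hkey, Finset.sum_insert hnotmem, ih _ hcard' (na G s) huG hut rfl, wt]
      ring

lemma cross_aux {s t : ℝ} (hs : s ∈ G) (ht : t ∈ G) (hst : s ≤ t) :
    (∑ a ∈ G, wt G φ a * |(if a < s then (1:ℝ) else 0) - (if a < t then 1 else 0)|)
      = φ t - φ s := by
  have hpt : ∀ a ∈ G, wt G φ a * |(if a < s then (1:ℝ) else 0) - (if a < t then 1 else 0)|
      = if s ≤ a ∧ a < t then wt G φ a else 0 := by
    intro a _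
    by_cases h1 : a < s
    · have h2 : a < t := lt_of_lt_of_le h1 hst
      rw [if_pos h1, if_pos h2, if_neg (by rintro ⟨c1, -⟩; exact absurd h1 (not_lt.2 c1))]
      simp
    · by_cases h2 : a < t
      · rw [if_neg h1, if_pos h2, if_pos ⟨not_lt.1 h1, h2⟩]
        simp
      · rw [if_neg h1, if_neg h2, if_neg (by rintro ⟨-, c2⟩; exact h2 c2)]
        simp
  rw [Finset.sum_congr rfl hpt, Finset.sum_ite, Finset.sum_const_zero, add_zero]
  exact tele φ ht _ s hs hst rfl

lemma cross (hφ : Monotone φ) {s t : ℝ} (hs : s ∈ G) (ht : t ∈ G) :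
    (∑ a ∈ G, wt G φ a * |(if a < s then (1:ℝ) else 0) - (if a < t then 1 else 0)|)
      = |φ s - φ t| := by
  rcases le_total s t with h | h
  · rw [cross_aux φ hs ht h, abs_sub_comm, abs_of_nonneg (sub_nonneg.2 (hφ h))]
  · rw [Finset.sum_congr rfl (fun a _ => by rw [abs_sub_comm] :
      ∀ a ∈ G, wt G φ a * |(if a < s then (1:ℝ) else 0) - (if a < t then 1 else 0)|
        = wt G φ a * |(if a < t then (1:ℝ) else 0) - (if a < s then 1 else 0)|),
      cross_aux φ ht hs h, abs_of_nonneg (sub_nonneg.2 (hφ h))]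

end Grid

noncomputable def phim (m t : ℝ) : ℝ := (t - m) * |t - m|

lemma phim_mono (m : ℝ) : Monotone (phim m) :=
  fun a b h => psi_mono_le (sub_le_sub_right h m)

lemma phim_strict (m : ℝ) {a b : ℝ} (h : a < b) : phim m a < phim m b :=
  psi_mono (sub_lt_sub_right h m)

/-- threshold indicator -/
noncomputable def indf {X : Type*} (f : X → ℝ) (a : ℝ) (x : X) : ℝ := if a < f x then 1 else 0

section Pairs

variable {X : Type*} [Fintype X] {p : X → ℝ} {f : X → ℝ}

lemma indf_mem_01 (a : ℝ) (x : X) : indf f a x = 0 ∨ indf f a x = 1 := by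
  unfold indf; by_cases h : a < f x <;> simp [h]

lemma pair_ind (S : Finset X) (a : ℝ) :
    (∑ σ ∈ S, ∑ σ' ∈ S, p σ * p σ' * |indf f a σ - indf f a σ'|)
      = 2 * (∑ σ ∈ S, p σ * indf f a σ)
          * ((∑ σ ∈ S, p σ) - ∑ σ ∈ S, p σ * indf f a σ) := by
  have hpt : ∀ σ σ' : X, p σ * p σ' * |indf f a σ - indf f a σ'|
      = (p σ * indf f a σ) * (p σ' - p σ' * indf f a σ')
        + (p σ - p σ * indf f a σ) * (p σ' * indf f a σ') := by
    intro σ σ'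
    rcases indf_mem_01 (f := f) a σ with h | h <;>
      rcases indf_mem_01 (f := f) a σ' with h' | h' <;>
      rw [h, h'] <;> norm_num
  calc (∑ σ ∈ S, ∑ σ' ∈ S, p σ * p σ' * |indf f a σ - indf f a σ'|)
      = ∑ σ ∈ S, ∑ σ' ∈ S, ((p σ * indf f a σ) * (p σ' - p σ' * indf f a σ')
          + (p σ - p σ * indf f a σ) * (p σ' * indf f a σ')) :=
        Finset.sum_congr rfl fun σ _ => Finset.sum_congr rfl fun σ' _ => hpt σ σ'
    _ = (∑ σ ∈ S, ∑ σ' ∈ S, (p σ * indf f a σ) * (p σ' - p σ' * indf f a σ'))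
        + ∑ σ ∈ S, ∑ σ' ∈ S, (p σ - p σ * indf f a σ) * (p σ' * indf f a σ') := by
        rw [← Finset.sum_add_distrib]
        exact Finset.sum_congr rfl fun σ _ => Finset.sum_add_distrib
    _ = (∑ σ ∈ S, p σ * indf f a σ) * (∑ σ' ∈ S, (p σ' - p σ' * indf f a σ'))
        + (∑ σ ∈ S, (p σ - p σ * indf f a σ)) * (∑ σ' ∈ S, p σ' * indf f a σ') := by
        rw [Finset.sum_mul_sum, Finset.sum_mul_sum]
    _ = _ := by rw [Finset.sum_sub_distrib]; ring

lemma pair_sq (S : Finset X) :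
    (∑ σ ∈ S, ∑ σ' ∈ S, p σ * p σ' * (f σ - f σ')^2)
      = 2 * ((∑ x ∈ S, p x) * (∑ x ∈ S, p x * f x ^ 2) - (∑ x ∈ S, p x * f x)^2) := by
  calc (∑ σ ∈ S, ∑ σ' ∈ S, p σ * p σ' * (f σ - f σ')^2)
      = ∑ σ ∈ S, ∑ σ' ∈ S, ((p σ * f σ ^ 2) * p σ' - 2 * ((p σ * f σ) * (p σ' * f σ'))
          + p σ * (p σ' * f σ' ^ 2)) :=
        Finset.sum_congr rfl fun σ _ => Finset.sum_congr rfl fun σ' _ => by ring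
    _ = (∑ σ ∈ S, ∑ σ' ∈ S, (p σ * f σ ^ 2) * p σ')
        - 2 * (∑ σ ∈ S, ∑ σ' ∈ S, (p σ * f σ) * (p σ' * f σ'))
        + ∑ σ ∈ S, ∑ σ' ∈ S, p σ * (p σ' * f σ' ^ 2) := by
        have inner : ∀ σ ∈ S, (∑ σ' ∈ S, ((p σ * f σ ^ 2) * p σ' - 2 * ((p σ * f σ) * (p σ' * f σ'))
            + p σ * (p σ' * f σ' ^ 2)))
            = (∑ σ' ∈ S, (p σ * f σ ^ 2) * p σ') - 2 * (∑ σ' ∈ S, (p σ * f σ) * (p σ' * f σ'))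
              + ∑ σ' ∈ S, p σ * (p σ' * f σ' ^ 2) := by
          intro σ _
          rw [Finset.sum_add_distrib, Finset.sum_sub_distrib, ← Finset.mul_sum, ← Finset.mul_sum]
        rw [Finset.sum_congr rfl inner, Finset.sum_add_distrib, Finset.sum_sub_distrib,
          ← Finset.mul_sum]
    _ = (∑ σ ∈ S, p σ * f σ ^ 2) * (∑ σ' ∈ S, p σ')
        - 2 * ((∑ σ ∈ S, p σ * f σ) * (∑ σ' ∈ S, p σ' * f σ'))
        + (∑ σ ∈ S, p σ) * (∑ σ' ∈ S, p σ' * f σ' ^ 2) := by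
        rw [Finset.sum_mul_sum, Finset.sum_mul_sum, Finset.sum_mul_sum]
    _ = _ := by ring

lemma pair_abs_sq_le (S : Finset X) (hp : ∀ x, 0 ≤ p x) (m : ℝ) :
    (∑ σ ∈ S, ∑ σ' ∈ S, p σ * p σ' * ((|f σ - m| + |f σ' - m|))^2)
      ≤ 4 * (∑ x ∈ S, p x) * (∑ x ∈ S, p x * (f x - m)^2) := by
  have step : (∑ σ ∈ S, ∑ σ' ∈ S, p σ * p σ' * ((|f σ - m| + |f σ' - m|))^2)
      ≤ ∑ σ ∈ S, ∑ σ' ∈ S, ((p σ * (f σ - m)^2) * (2 * p σ')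
          + p σ * (2 * (p σ' * (f σ' - m)^2))) := by
    refine Finset.sum_le_sum fun σ _ => Finset.sum_le_sum fun σ' _ => ?_
    have h2 : (|f σ - m| + |f σ' - m|)^2 ≤ 2 * (f σ - m)^2 + 2 * (f σ' - m)^2 := by
      have e1 : |f σ - m|^2 = (f σ - m)^2 := sq_abs _
      have e2 : |f σ' - m|^2 = (f σ' - m)^2 := sq_abs _
      nlinarith [sq_nonneg (|f σ - m| - |f σ' - m|)]
    have hpp : 0 ≤ p σ * p σ' := mul_nonneg (hp σ) (hp σ')
    nlinarith [mul_le_mul_of_nonneg_left h2 hpp]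
  refine le_trans step (le_of_eq ?_)
  have inner : ∀ σ ∈ S, (∑ σ' ∈ S, ((p σ * (f σ - m)^2) * (2 * p σ')
      + p σ * (2 * (p σ' * (f σ' - m)^2))))
      = (p σ * (f σ - m)^2) * (2 * ∑ σ' ∈ S, p σ')
        + p σ * (2 * ∑ σ' ∈ S, p σ' * (f σ' - m)^2) := by
    intro σ _
    rw [Finset.sum_add_distrib, ← Finset.mul_sum, ← Finset.mul_sum, ← Finset.mul_sum,
      ← Finset.mul_sum]
  rw [Finset.sum_congr rfl inner, Finset.sum_add_distrib, ← Finset.sum_mul, ← Finset.sum_mul]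
  ring

end Pairs

section FiberBound

variable {X : Type*} [Fintype X] {B : Type*} [Fintype B] [DecidableEq B]
variable {p : X → ℝ} {π : X → B}

lemma fiber_bound (hp : ∀ x, 0 ≤ p x) (f : X → ℝ) (m : ℝ) (b : B) :
    (∑ σ ∈ fib π b, ∑ σ' ∈ fib π b, p σ * p σ' * |phim m (f σ) - phim m (f σ')|)
        / (2 * fm p π b)
      ≤ Real.sqrt (2 * ((∑ x ∈ fib π b, p x * (f x - ce p π f x)^2)
          * (∑ x ∈ fib π b, p x * (f x - m)^2))) := by
  set S := fib π b with hS
  set M := fm p π b with hM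
  rcases eq_or_lt_of_le (fm_nonneg hp (π := π) b) with h0 | h0
  · have hz : (∑ σ ∈ S, ∑ σ' ∈ S, p σ * p σ' * |phim m (f σ) - phim m (f σ')|) = 0 :=
      Finset.sum_eq_zero fun σ hσ => Finset.sum_eq_zero fun σ' _ => by
        rw [p_eq_zero_of_fm_eq_zero hp h0.symm hσ]; ring
    rw [hz, zero_div]
    exact Real.sqrt_nonneg _
  -- positive-mass fiber
  set VB := ∑ x ∈ S, p x * (f x - ce p π f x)^2 with hVB
  set Q := ∑ x ∈ S, p x * (f x - m)^2 with hQ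
  have hQ0 : 0 ≤ Q := Finset.sum_nonneg fun x _ => mul_nonneg (hp x) (sq_nonneg _)
  have hVB0 : 0 ≤ VB := Finset.sum_nonneg fun x _ => mul_nonneg (hp x) (sq_nonneg _)
  -- step 1: pointwise bound
  have step1 : (∑ σ ∈ S, ∑ σ' ∈ S, p σ * p σ' * |phim m (f σ) - phim m (f σ')|)
      ≤ ∑ σ ∈ S, ∑ σ' ∈ S, p σ * p σ' * (|f σ - f σ'| * (|f σ - m| + |f σ' - m|)) := by
    refine Finset.sum_le_sum fun σ _ => Finset.sum_le_sum fun σ' _ => ?_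
    refine mul_le_mul_of_nonneg_left ?_ (mul_nonneg (hp σ) (hp σ'))
    have := psi_diff_le (f σ - m) (f σ' - m)
    rwa [sub_sub_sub_cancel_right] at this
  -- step 2: Cauchy-Schwarz on the product
  set u : X × X → ℝ := fun z => Real.sqrt (p z.1 * p z.2) * |f z.1 - f z.2| with hu
  set v : X × X → ℝ := fun z => Real.sqrt (p z.1 * p z.2) * (|f z.1 - m| + |f z.2 - m|) with hv
  have hcs := Finset.sum_mul_sq_le_sq_mul_sq (S ×ˢ S) u v
  have huv : (∑ z ∈ S ×ˢ S, u z * v z)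
      = ∑ σ ∈ S, ∑ σ' ∈ S, p σ * p σ' * (|f σ - f σ'| * (|f σ - m| + |f σ' - m|)) := by
    rw [Finset.sum_product]
    refine Finset.sum_congr rfl fun σ _ => Finset.sum_congr rfl fun σ' _ => ?_
    have : Real.sqrt (p σ * p σ') * Real.sqrt (p σ * p σ') = p σ * p σ' :=
      Real.mul_self_sqrt (mul_nonneg (hp σ) (hp σ'))
    simp only [hu, hv]
    calc Real.sqrt (p σ * p σ') * |f σ - f σ'|
          * (Real.sqrt (p σ * p σ') * (|f σ - m| + |f σ' - m|))
        = (Real.sqrt (p σ * p σ') * Real.sqrt (p σ * p σ'))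
            * (|f σ - f σ'| * (|f σ - m| + |f σ' - m|)) := by ring
      _ = _ := by rw [this]
  have hu2 : (∑ z ∈ S ×ˢ S, u z ^ 2) = ∑ σ ∈ S, ∑ σ' ∈ S, p σ * p σ' * (f σ - f σ')^2 := by
    rw [Finset.sum_product]
    refine Finset.sum_congr rfl fun σ _ => Finset.sum_congr rfl fun σ' _ => ?_
    simp only [hu]
    rw [mul_pow, Real.sq_sqrt (mul_nonneg (hp σ) (hp σ')), sq_abs]
  have hv2 : (∑ z ∈ S ×ˢ S, v z ^ 2)
      = ∑ σ ∈ S, ∑ σ' ∈ S, p σ * p σ' * (|f σ - m| + |f σ' - m|)^2 := by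
    rw [Finset.sum_product]
    refine Finset.sum_congr rfl fun σ _ => Finset.sum_congr rfl fun σ' _ => ?_
    simp only [hv]
    rw [mul_pow, Real.sq_sqrt (mul_nonneg (hp σ) (hp σ'))]
  -- step 3: identify/estimate the two factors
  have hceS : ∀ x ∈ S, ce p π f x = fsum p π f b / M := fun x hx => ce_eq_on_fiber hx f
  have hfac1 : (∑ σ ∈ S, ∑ σ' ∈ S, p σ * p σ' * (f σ - f σ')^2) = 2 * (M * VB) := by
    rw [pair_sq]
    have : VB = (∑ x ∈ S, p x * f x ^ 2) - (∑ x ∈ S, p x * f x)^2 / M := by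
      rw [hVB]
      have expand : ∀ x ∈ S, p x * (f x - ce p π f x)^2
          = p x * f x ^2 - 2 * ((p x * f x) * (fsum p π f b / M))
            + p x * (fsum p π f b / M)^2 := by
        intro x hx
        rw [hceS x hx]; ring
      rw [Finset.sum_congr rfl expand, Finset.sum_add_distrib, Finset.sum_sub_distrib,
        ← Finset.mul_sum, ← Finset.sum_mul, ← Finset.sum_mul]
      have hfs : (∑ x ∈ S, p x * f x) = fsum p π f b := rfl
      have hMs : (∑ x ∈ S, p x) = M := rfl
      rw [hfs, hMs]
      field_simp
      ring
    rw [this]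
    have hMs : (∑ x ∈ S, p x) = M := rfl
    field_simp
    rw [hMs]
    have hM0 : M ≠ 0 := ne_of_gt h0
    rw [mul_sub, mul_div_assoc', mul_div_cancel_left₀ _ hM0]
  have hfac2 : (∑ σ ∈ S, ∑ σ' ∈ S, p σ * p σ' * (|f σ - m| + |f σ' - m|)^2)
      ≤ 4 * M * Q := pair_abs_sq_le S hp m
  -- step 4: conclude
  have hN1 : (∑ σ ∈ S, ∑ σ' ∈ S, p σ * p σ' * (|f σ - f σ'| * (|f σ - m| + |f σ' - m|)))
      ≤ Real.sqrt (2 * (M * VB) * (4 * M * Q)) := by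
    have hnn : 0 ≤ ∑ z ∈ S ×ˢ S, u z * v z := by
      refine Finset.sum_nonneg fun z _ => mul_nonneg ?_ ?_
      · exact mul_nonneg (Real.sqrt_nonneg _) (abs_nonneg _)
      · exact mul_nonneg (Real.sqrt_nonneg _) (by positivity)
    have hsq : (∑ z ∈ S ×ˢ S, u z * v z)^2 ≤ 2 * (M * VB) * (4 * M * Q) := by
      refine le_trans hcs ?_
      rw [hu2, hv2, hfac1]
      refine mul_le_mul_of_nonneg_left hfac2 (by positivity)
    rw [← huv]
    calc (∑ z ∈ S ×ˢ S, u z * v z) = Real.sqrt ((∑ z ∈ S ×ˢ S, u z * v z)^2) :=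
          (Real.sqrt_sq hnn).symm
      _ ≤ Real.sqrt (2 * (M * VB) * (4 * M * Q)) := Real.sqrt_le_sqrt hsq
  have hid : Real.sqrt (2 * (M * VB) * (4 * M * Q)) = (2 * M) * Real.sqrt (2 * (VB * Q)) := by
    have : 2 * (M * VB) * (4 * M * Q) = (2*M)^2 * (2 * (VB * Q)) := by ring
    rw [this, Real.sqrt_mul (sq_nonneg _), Real.sqrt_sq (by positivity)]
  rw [div_le_iff₀ (by positivity)]
  calc (∑ σ ∈ S, ∑ σ' ∈ S, p σ * p σ' * |phim m (f σ) - phim m (f σ')|)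
      ≤ Real.sqrt (2 * (M * VB) * (4 * M * Q)) := le_trans step1 hN1
    _ = Real.sqrt (2 * (VB * Q)) * (2 * M) := by rw [hid]; ring

end FiberBound

section Global

variable {X : Type*} [Fintype X] {B : Type*} [Fintype B] [DecidableEq B]
variable {p : X → ℝ} {f : X → ℝ}

lemma sum_wt_pairsum (G : Finset ℝ) (φ : ℝ → ℝ) (hφ : Monotone φ) (S : Finset X)
    (hfG : ∀ x : X, f x ∈ G) :
    (∑ a ∈ G, wt G φ a * ∑ σ ∈ S, ∑ σ' ∈ S, p σ * p σ' * |indf f a σ - indf f a σ'|)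
      = ∑ σ ∈ S, ∑ σ' ∈ S, p σ * p σ' * |φ (f σ) - φ (f σ')| := by
  calc (∑ a ∈ G, wt G φ a * ∑ σ ∈ S, ∑ σ' ∈ S, p σ * p σ' * |indf f a σ - indf f a σ'|)
      = ∑ a ∈ G, ∑ σ ∈ S, ∑ σ' ∈ S, wt G φ a * (p σ * p σ' * |indf f a σ - indf f a σ'|) := by
        refine Finset.sum_congr rfl fun a _ => ?_
        rw [Finset.mul_sum]
        exact Finset.sum_congr rfl fun σ _ => Finset.mul_sum _ _ _
    _ = ∑ σ ∈ S, ∑ a ∈ G, ∑ σ' ∈ S, wt G φ a * (p σ * p σ' * |indf f a σ - indf f a σ'|) :=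
        Finset.sum_comm
    _ = ∑ σ ∈ S, ∑ σ' ∈ S, ∑ a ∈ G, wt G φ a * (p σ * p σ' * |indf f a σ - indf f a σ'|) :=
        Finset.sum_congr rfl fun σ _ => Finset.sum_comm
    _ = ∑ σ ∈ S, ∑ σ' ∈ S, p σ * p σ' * ∑ a ∈ G, wt G φ a * |indf f a σ - indf f a σ'| := by
        refine Finset.sum_congr rfl fun σ _ => Finset.sum_congr rfl fun σ' _ => ?_
        rw [Finset.mul_sum]
        exact Finset.sum_congr rfl fun a _ => by ring
    _ = ∑ σ ∈ S, ∑ σ' ∈ S, p σ * p σ' * |φ (f σ) - φ (f σ')| := by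
        refine Finset.sum_congr rfl fun σ _ => Finset.sum_congr rfl fun σ' _ => ?_
        simp only [indf]
        rw [cross φ hφ (hfG σ) (hfG σ')]

/-- Key upper bound for the weighted sum of conditional variances of threshold events. -/
lemma sum_wt_D_le (hp : ∀ x, 0 ≤ p x) (m : ℝ) (π : X → B) :
    (∑ a ∈ Finset.image f univ, wt (Finset.image f univ) (phim m) a *
        (∑ x : X, p x * (ce p π (indf f a) x * (1 - ce p π (indf f a) x))))
      ≤ Real.sqrt 2 * (Real.sqrt (∑ x : X, p x * (f x - ce p π f x)^2)
          * Real.sqrt (∑ x : X, p x * (f x - m)^2)) := by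
  set G := Finset.image f univ with hG
  have hfG : ∀ x : X, f x ∈ G := fun x => Finset.mem_image_of_mem f (mem_univ x)
  -- rewrite the inner expectation fiberwise
  have hDce : ∀ a : ℝ, (∑ x : X, p x * (ce p π (indf f a) x * (1 - ce p π (indf f a) x)))
      = ∑ b : B, (∑ σ ∈ fib π b, ∑ σ' ∈ fib π b,
          p σ * p σ' * |indf f a σ - indf f a σ'|) / (2 * fm p π b) := by
    intro a
    rw [← sum_fib (π := π) (fun x => p x * (ce p π (indf f a) x * (1 - ce p π (indf f a) x)))]
    refine Finset.sum_congr rfl fun b _ => ?_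
    rw [pair_ind (fib π b) a]
    have hce : ∀ x ∈ fib π b, ce p π (indf f a) x
        = fsum p π (indf f a) b / fm p π b := fun x hx => ce_eq_on_fiber hx _
    have hl : (∑ x ∈ fib π b, p x * (ce p π (indf f a) x * (1 - ce p π (indf f a) x)))
        = fm p π b * ((fsum p π (indf f a) b / fm p π b)
            * (1 - fsum p π (indf f a) b / fm p π b)) := by
      rw [Finset.sum_congr rfl (fun x hx => by rw [hce x hx] :
        ∀ x ∈ fib π b, p x * (ce p π (indf f a) x * (1 - ce p π (indf f a) x))
          = p x * (fsum p π (indf f a) b / fm p π b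
              * (1 - fsum p π (indf f a) b / fm p π b))), ← Finset.sum_mul]
      rfl
    rw [hl]
    rcases eq_or_ne (fm p π b) 0 with h0 | h0
    · rw [h0]
      have : fsum p π (indf f a) b = 0 :=
        Finset.sum_eq_zero fun x hx => by rw [p_eq_zero_of_fm_eq_zero hp h0 hx, zero_mul]
      rw [this]
      norm_num
    · have hfs : (∑ σ ∈ fib π b, p σ * indf f a σ) = fsum p π (indf f a) b := rfl
      have hfm : (∑ σ ∈ fib π b, p σ) = fm p π b := rfl
      rw [hfs, hfm]
      field_simp
  rw [Finset.sum_congr rfl fun a (_ : a ∈ G) => by rw [hDce a]]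
  -- swap the sums over a and over fibers
  rw [Finset.sum_congr rfl fun a (_ : a ∈ G) => Finset.mul_sum _ _ _, Finset.sum_comm]
  -- bound each fiber
  have hfib : ∀ b : B, (∑ a ∈ G, wt G (phim m) a *
      ((∑ σ ∈ fib π b, ∑ σ' ∈ fib π b, p σ * p σ' * |indf f a σ - indf f a σ'|)
        / (2 * fm p π b)))
      ≤ Real.sqrt (2 * ((∑ x ∈ fib π b, p x * (f x - ce p π f x)^2)
          * (∑ x ∈ fib π b, p x * (f x - m)^2))) := by
    intro b
    have e1 : (∑ a ∈ G, wt G (phim m) a *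
        ((∑ σ ∈ fib π b, ∑ σ' ∈ fib π b, p σ * p σ' * |indf f a σ - indf f a σ'|)
          / (2 * fm p π b)))
        = (∑ σ ∈ fib π b, ∑ σ' ∈ fib π b, p σ * p σ' * |phim m (f σ) - phim m (f σ')|)
            / (2 * fm p π b) := by
      rw [← sum_wt_pairsum G (phim m) (phim_mono m) (fib π b) hfG, Finset.sum_div]
      exact Finset.sum_congr rfl fun a _ => by rw [mul_div_assoc]
    rw [e1]
    exact fiber_bound hp f m b
  refine le_trans (Finset.sum_le_sum fun b _ => hfib b) ?_
  -- Cauchy-Schwarz over the fibers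
  set VB : B → ℝ := fun b => ∑ x ∈ fib π b, p x * (f x - ce p π f x)^2 with hVB
  set Q : B → ℝ := fun b => ∑ x ∈ fib π b, p x * (f x - m)^2 with hQ
  have hVB0 : ∀ b, 0 ≤ VB b := fun b =>
    Finset.sum_nonneg fun x _ => mul_nonneg (hp x) (sq_nonneg _)
  have hQ0 : ∀ b, 0 ≤ Q b := fun b =>
    Finset.sum_nonneg fun x _ => mul_nonneg (hp x) (sq_nonneg _)
  have e2 : ∀ b : B, Real.sqrt (2 * (VB b * Q b))
      = Real.sqrt 2 * (Real.sqrt (VB b) * Real.sqrt (Q b)) := by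
    intro b
    rw [Real.sqrt_mul (by norm_num : (0:ℝ) ≤ 2), Real.sqrt_mul (hVB0 b)]
  rw [Finset.sum_congr rfl fun b (_ : b ∈ univ) => e2 b, ← Finset.mul_sum]
  refine mul_le_mul_of_nonneg_left ?_ (Real.sqrt_nonneg 2)
  -- ∑ √(VB b) √(Q b) ≤ √(∑ VB) √(∑ Q)
  have hcs := Finset.sum_mul_sq_le_sq_mul_sq univ (fun b => Real.sqrt (VB b))
    (fun b => Real.sqrt (Q b))
  have hsq : ∀ b : B, Real.sqrt (VB b) ^ 2 = VB b := fun b => Real.sq_sqrt (hVB0 b)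
  have hsq' : ∀ b : B, Real.sqrt (Q b) ^ 2 = Q b := fun b => Real.sq_sqrt (hQ0 b)
  rw [Finset.sum_congr rfl fun b _ => hsq b, Finset.sum_congr rfl fun b _ => hsq' b] at hcs
  have hWsum : (∑ b : B, VB b) = ∑ x : X, p x * (f x - ce p π f x)^2 :=
    sum_fib (π := π) _
  have hQsum : (∑ b : B, Q b) = ∑ x : X, p x * (f x - m)^2 :=
    sum_fib (π := π) _
  rw [hWsum, hQsum] at hcs
  have hnn : 0 ≤ ∑ b : B, Real.sqrt (VB b) * Real.sqrt (Q b) :=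
    Finset.sum_nonneg fun b _ => mul_nonneg (Real.sqrt_nonneg _) (Real.sqrt_nonneg _)
  calc (∑ b : B, Real.sqrt (VB b) * Real.sqrt (Q b))
      = Real.sqrt ((∑ b : B, Real.sqrt (VB b) * Real.sqrt (Q b))^2) := (Real.sqrt_sq hnn).symm
    _ ≤ Real.sqrt ((∑ x : X, p x * (f x - ce p π f x)^2) * ∑ x : X, p x * (f x - m)^2) :=
        Real.sqrt_le_sqrt hcs
    _ = _ := Real.sqrt_mul (Finset.sum_nonneg fun x _ => mul_nonneg (hp x) (sq_nonneg _)) _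

end Global

section Lower

variable {X : Type*} [Fintype X] {p : X → ℝ} {f : X → ℝ}

lemma pvar_indf (h1 : ∑ x : X, p x = 1) (a : ℝ) :
    pvar p (indf f a) = pexp p (indf f a) * (1 - pexp p (indf f a)) := by
  rw [pvar_eq_sub h1]
  have e : (∑ x : X, p x * indf f a x ^ 2) = pexp p (indf f a) := by
    refine Finset.sum_congr rfl fun x _ => ?_
    rcases indf_mem_01 (f := f) a x with h | h <;> rw [h] <;> norm_num
  rw [e]
  ring

lemma Dlow (hp : ∀ x, 0 ≤ p x) (m : ℝ)
    (hm1 : 1/2 ≤ ∑ x ∈ univ.filter (fun x : X => f x ≤ m), p x)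
    (hm2 : 1/2 ≤ ∑ x ∈ univ.filter (fun x : X => m ≤ f x), p x) :
    (∑ x : X, p x * (f x - m)^2)
      ≤ ∑ σ : X, ∑ σ' : X, p σ * p σ' * |phim m (f σ) - phim m (f σ')| := by
  set c : X → X → Prop := fun σ σ' => (f σ - m) * (f σ' - m) ≤ 0 with hc
  have hdec : ∀ σ σ', Decidable (c σ σ') := fun σ σ' => inferInstanceAs (Decidable (_ ≤ _))
  -- T1: weighted first-coordinate square over opposite-sign pairs
  have key1 : ∀ σ : X, p σ * (f σ - m)^2 * (1/2)
      ≤ p σ * (f σ - m)^2 * (∑ σ' : X, p σ' * (if c σ σ' then 1 else 0)) := by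
    intro σ
    rcases lt_trichotomy (f σ) m with hσ | hσ | hσ
    · refine mul_le_mul_of_nonneg_left ?_ (mul_nonneg (hp σ) (sq_nonneg _))
      refine le_trans hm2 ?_
      rw [Finset.sum_filter]
      refine Finset.sum_le_sum fun σ' _ => ?_
      by_cases h' : m ≤ f σ'
      · rw [if_pos h', if_pos (mul_nonpos_iff.2 (Or.inr ⟨by linarith, by linarith⟩)), mul_one]
      · rw [if_neg h']
        by_cases h'' : c σ σ' <;> simp [h'', hp σ']
    · rw [hσ]; simp
    · refine mul_le_mul_of_nonneg_left ?_ (mul_nonneg (hp σ) (sq_nonneg _))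
      refine le_trans hm1 ?_
      rw [Finset.sum_filter]
      refine Finset.sum_le_sum fun σ' _ => ?_
      by_cases h' : f σ' ≤ m
      · rw [if_pos h', if_pos (mul_nonpos_iff.2 (Or.inl ⟨by linarith, by linarith⟩)), mul_one]
      · rw [if_neg h']
        by_cases h'' : c σ σ' <;> simp [h'', hp σ']
  have hT1 : (∑ x : X, p x * (f x - m)^2) * (1/2)
      ≤ ∑ σ : X, ∑ σ' : X, p σ * p σ' * (if c σ σ' then (f σ - m)^2 else 0) := by
    rw [Finset.sum_mul]
    refine le_trans (Finset.sum_le_sum fun σ _ => key1 σ) ?_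
    refine le_of_eq (Finset.sum_congr rfl fun σ _ => ?_)
    rw [Finset.mul_sum]
    refine Finset.sum_congr rfl fun σ' _ => ?_
    by_cases h'' : c σ σ' <;> simp [h''] <;> ring
  have hT2 : (∑ σ : X, ∑ σ' : X, p σ * p σ' * (if c σ σ' then (f σ' - m)^2 else 0))
      = ∑ σ : X, ∑ σ' : X, p σ * p σ' * (if c σ σ' then (f σ - m)^2 else 0) := by
    rw [Finset.sum_comm]
    refine Finset.sum_congr rfl fun σ _ => Finset.sum_congr rfl fun σ' _ => ?_
    have hsymm : c σ' σ ↔ c σ σ' := by rw [hc]; constructor <;> intro h <;> linarith [mul_comm (f σ - m) (f σ' - m)] 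
    by_cases h'' : c σ σ'
    · rw [if_pos h'', if_pos (hsymm.2 h'')]; ring
    · rw [if_neg h'', if_neg (fun hh => h'' (hsymm.1 hh))]; ring
  have step : ∀ σ σ' : X, p σ * p σ' * (if c σ σ' then (f σ - m)^2 else 0)
        + p σ * p σ' * (if c σ σ' then (f σ' - m)^2 else 0)
      ≤ p σ * p σ' * |phim m (f σ) - phim m (f σ')| := by
    intro σ σ'
    by_cases h'' : c σ σ'
    · rw [if_pos h'', if_pos h'']
      have := psi_diff_ge (f σ - m) (f σ' - m) h''
      have hpp : 0 ≤ p σ * p σ' := mul_nonneg (hp σ) (hp σ')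
      have e : phim m (f σ) = (f σ - m) * |f σ - m| := rfl
      have e' : phim m (f σ') = (f σ' - m) * |f σ' - m| := rfl
      rw [e, e']
      nlinarith
    · rw [if_neg h'', if_neg h'']
      have : 0 ≤ p σ * p σ' * |phim m (f σ) - phim m (f σ')| :=
        mul_nonneg (mul_nonneg (hp σ) (hp σ')) (abs_nonneg _)
      linarith
  calc (∑ x : X, p x * (f x - m)^2)
      = (∑ x : X, p x * (f x - m)^2) * (1/2) + (∑ x : X, p x * (f x - m)^2) * (1/2) := by ring
    _ ≤ (∑ σ : X, ∑ σ' : X, p σ * p σ' * (if c σ σ' then (f σ - m)^2 else 0))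
        + ∑ σ : X, ∑ σ' : X, p σ * p σ' * (if c σ σ' then (f σ' - m)^2 else 0) := by
        rw [hT2]; exact add_le_add hT1 hT1
    _ = ∑ σ : X, ∑ σ' : X, (p σ * p σ' * (if c σ σ' then (f σ - m)^2 else 0)
        + p σ * p σ' * (if c σ σ' then (f σ' - m)^2 else 0)) := by
        rw [← Finset.sum_add_distrib]
        exact Finset.sum_congr rfl fun σ _ => Finset.sum_add_distrib.symm
    _ ≤ _ := Finset.sum_le_sum fun σ _ => Finset.sum_le_sum fun σ' _ => step σ σ'

lemma sum_wt_Vq_ge (hp : ∀ x, 0 ≤ p x) (h1 : ∑ x : X, p x = 1) (m : ℝ)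
    (hm1 : 1/2 ≤ ∑ x ∈ univ.filter (fun x : X => f x ≤ m), p x)
    (hm2 : 1/2 ≤ ∑ x ∈ univ.filter (fun x : X => m ≤ f x), p x) :
    (∑ x : X, p x * (f x - m)^2) / 2
      ≤ ∑ a ∈ Finset.image f univ, wt (Finset.image f univ) (phim m) a * pvar p (indf f a) := by
  have hfG : ∀ x : X, f x ∈ Finset.image f univ := fun x => Finset.mem_image_of_mem f (mem_univ x)
  have epv : ∀ a : ℝ, pvar p (indf f a)
      = (∑ σ : X, ∑ σ' : X, p σ * p σ' * |indf f a σ - indf f a σ'|) / 2 := by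
    intro a
    rw [pair_ind univ a, pvar_indf h1 a]
    have h2 : (∑ σ : X, p σ * indf f a σ) = pexp p (indf f a) := rfl
    rw [h2, h1]
    ring
  rw [Finset.sum_congr rfl fun a (_ : a ∈ Finset.image f univ) => by rw [epv a]]
  have swap : (∑ a ∈ Finset.image f univ, wt (Finset.image f univ) (phim m) a *
      ((∑ σ : X, ∑ σ' : X, p σ * p σ' * |indf f a σ - indf f a σ'|) / 2))
      = (∑ σ : X, ∑ σ' : X, p σ * p σ' * |phim m (f σ) - phim m (f σ')|) / 2 := by
    rw [← sum_wt_pairsum (Finset.image f univ) (phim m) (phim_mono m) univ hfG, Finset.sum_div]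
    exact Finset.sum_congr rfl fun a _ => by rw [mul_div_assoc]
  rw [swap]
  have := Dlow (f := f) hp m hm1 hm2
  linarith

end Lower

section Median

variable {X : Type*} [Fintype X] {p : X → ℝ} {f : X → ℝ}

lemma exists_median (hp : ∀ x, 0 ≤ p x) (h1 : ∑ x : X, p x = 1) :
    ∃ m : ℝ, (1/2 ≤ ∑ x ∈ univ.filter (fun x : X => f x ≤ m), p x)
      ∧ (1/2 ≤ ∑ x ∈ univ.filter (fun x : X => m ≤ f x), p x) := by
  obtain ⟨x₀, -, hx₀⟩ := Finset.exists_ne_zero_of_sum_ne_zero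
    (by rw [h1]; exact one_ne_zero : (∑ x : X, p x) ≠ 0)
  set G := Finset.image f univ with hG
  have hGne : G.Nonempty := ⟨f x₀, Finset.mem_image_of_mem f (mem_univ x₀)⟩
  set S := G.filter (fun t => 1/2 ≤ ∑ x ∈ univ.filter (fun x : X => f x ≤ t), p x) with hS
  have hmaxS : G.max' hGne ∈ S := by
    refine Finset.mem_filter.2 ⟨G.max'_mem hGne, ?_⟩
    have : univ.filter (fun x : X => f x ≤ G.max' hGne) = univ := by
      refine Finset.filter_true_of_mem fun x _ => ?_
      exact G.le_max' (f x) (Finset.mem_image_of_mem f (mem_univ x))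
    rw [this, h1]
    norm_num
  have hSne : S.Nonempty := ⟨_, hmaxS⟩
  refine ⟨S.min' hSne, ?_, ?_⟩
  · exact (Finset.mem_filter.1 (S.min'_mem hSne)).2
  · by_contra hcon
    push_neg at hcon
    set m := S.min' hSne with hm
    have hsplit := Finset.sum_filter_add_sum_filter_not univ (fun x : X => m ≤ f x) p
    rw [h1] at hsplit
    have hlow : 1/2 < ∑ x ∈ univ.filter (fun x : X => ¬ m ≤ f x), p x := by linarith
    have hne : (∑ x ∈ univ.filter (fun x : X => ¬ m ≤ f x), p x) ≠ 0 := by linarith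
    obtain ⟨x₁, hx₁mem, hx₁⟩ := Finset.exists_ne_zero_of_sum_ne_zero hne
    rw [mem_filter, not_le] at hx₁mem
    set T := G.filter (fun t => t < m) with hT
    have hTne : T.Nonempty :=
      ⟨f x₁, Finset.mem_filter.2 ⟨Finset.mem_image_of_mem f (mem_univ x₁), hx₁mem.2⟩⟩
    set t := T.max' hTne with ht
    have htT := Finset.mem_filter.1 (T.max'_mem hTne)
    have htS : t ∈ S := by
      refine Finset.mem_filter.2 ⟨htT.1, ?_⟩
      calc (1:ℝ)/2 ≤ ∑ x ∈ univ.filter (fun x : X => ¬ m ≤ f x), p x := hlow.le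
        _ ≤ ∑ x ∈ univ.filter (fun x : X => f x ≤ t), p x := by
            refine Finset.sum_le_sum_of_subset_of_nonneg ?_ (fun x _ _ => hp x)
            intro x hx
            rw [mem_filter, not_le] at hx
            rw [mem_filter]
            refine ⟨mem_univ x, T.le_max' (f x) ?_⟩
            exact Finset.mem_filter.2 ⟨Finset.mem_image_of_mem f (mem_univ x), hx.2⟩
    have := S.min'_le t htS
    rw [← hm] at this
    exact absurd (lt_of_le_of_lt this htT.2) (lt_irrefl m)

lemma exists_two_mass (h1 : ∑ x : X, p x = 1) (hv : 0 < pvar p f) :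
    ∃ x₁ x₂ : X, p x₁ ≠ 0 ∧ p x₂ ≠ 0 ∧ f x₁ < f x₂ := by
  by_contra hcon
  push_neg at hcon
  obtain ⟨x₀, -, hx₀⟩ := Finset.exists_ne_zero_of_sum_ne_zero
    (by rw [h1]; exact one_ne_zero : (∑ x : X, p x) ≠ 0)
  have hconst : ∀ x : X, p x ≠ 0 → f x = f x₀ := fun x hx =>
    le_antisymm (hcon x₀ x hx₀ hx) (hcon x x₀ hx hx₀)
  have hpexp : pexp p f = f x₀ := by
    rw [pexp]
    calc (∑ x : X, p x * f x) = ∑ x : X, p x * f x₀ := by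
          refine Finset.sum_congr rfl fun x _ => ?_
          rcases eq_or_ne (p x) 0 with h | h
          · rw [h, zero_mul, zero_mul]
          · rw [hconst x h]
      _ = f x₀ := by rw [← Finset.sum_mul, h1, one_mul]
  have : pvar p f = 0 := by
    rw [pvar, hpexp]
    refine Finset.sum_eq_zero fun x _ => ?_
    rcases eq_or_ne (p x) 0 with h | h
    · rw [h, zero_mul]
    · rw [hconst x h, sub_self]
      ring
  linarith

end Median

section Bool

variable {X : Type*} [Fintype X] {B : Type*} [Fintype B] [DecidableEq B]
variable {p : X → ℝ} {π : X → B}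

lemma bool_ce_var (hp : ∀ x, 0 ≤ p x) (g : X → ℝ) (hb : ∀ x, g x ^ 2 = g x) :
    (∑ x : X, p x * (g x - ce p π g x)^2)
      = ∑ x : X, p x * (ce p π g x * (1 - ce p π g x)) := by
  have e1 := sum_sq_expand (p := p) g (ce p π g)
  have e2 := ce_sq (π := π) hp g
  have e3 := tower (π := π) hp g
  have e4 : (∑ x : X, p x * g x ^ 2) = ∑ x : X, p x * g x :=
    Finset.sum_congr rfl fun x _ => by rw [hb x]
  have e5 : (∑ x : X, p x * (ce p π g x * (1 - ce p π g x)))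
      = (∑ x : X, p x * ce p π g x) - ∑ x : X, p x * (ce p π g x)^2 := by
    rw [← Finset.sum_sub_distrib]
    exact Finset.sum_congr rfl fun x _ => by ring
  rw [e1, e2, e5, e3, e4]
  have e6 : (∑ x : X, p x * g x * ce p π g x) = ∑ x : X, p x * (g x * ce p π g x) :=
    Finset.sum_congr rfl fun x _ => by ring
  rw [show (∑ x : X, p x * g x) - 2 * ∑ x : X, p x * (g x * ce p π g x)
      + ∑ x : X, p x * (g x * ce p π g x)
      = (∑ x : X, p x * g x) - ∑ x : X, p x * (g x * ce p π g x) from by ring, ← e2]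

lemma ce_bool_nonneg (hp : ∀ x, 0 ≤ p x) (g : X → ℝ) (h0 : ∀ x, 0 ≤ g x) (x : X) :
    0 ≤ ce p π g x :=
  div_nonneg (Finset.sum_nonneg fun y _ => mul_nonneg (hp y) (h0 y)) (fm_nonneg hp _)

lemma ce_bool_le_one (hp : ∀ x, 0 ≤ p x) (g : X → ℝ) (h1' : ∀ x, g x ≤ 1) (x : X) :
    ce p π g x ≤ 1 := by
  rw [ce]
  rcases eq_or_lt_of_le (fm_nonneg hp (π := π) (π x)) with h | h
  · have : fsum p π g (π x) = 0 :=
      Finset.sum_eq_zero fun y hy => by rw [p_eq_zero_of_fm_eq_zero hp h.symm hy, zero_mul]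
    rw [this, zero_div]
    norm_num
  · rw [div_le_one h]
    exact Finset.sum_le_sum fun y _ => mul_le_of_le_one_right (hp y) (h1' y)

lemma ce_one_sub (hp : ∀ x, 0 ≤ p x) (g : X → ℝ) {x : X} (hx : p x ≠ 0) :
    ce p π (fun z => 1 - g z) x = 1 - ce p π g x := by
  have hfm := fm_pos_of_p_pos (π := π) hp hx
  have hfs : fsum p π (fun z => 1 - g z) (π x) = fm p π (π x) - fsum p π g (π x) := by
    rw [fsum, fm, fsum, ← Finset.sum_sub_distrib]
    exact Finset.sum_congr rfl fun y _ => by ring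
  rw [ce, hfs, ce]
  field_simp

end Bool

section Bridge

variable {V : Type*} [Fintype V] [DecidableEq V] {Ω : Type*} [Fintype Ω] [DecidableEq Ω]

lemma cexp_eq_ce (P : (V → Ω) → ℝ) (U : Finset V) (g : (V → Ω) → ℝ) :
    cexp P U g = ce P (fun (ω : V → Ω) (v : {v // v ∈ U}) => ω v.1) g := by
  funext ω
  have hfil : (univ.filter (fun ω' : V → Ω => ∀ v ∈ U, ω' v = ω v))
      = fib (fun (ω : V → Ω) (v : {v // v ∈ U}) => ω v.1)
          ((fun (ω : V → Ω) (v : {v // v ∈ U}) => ω v.1) ω) := by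
    ext ω'
    simp only [fib, mem_filter, mem_univ, true_and]
    rw [funext_iff]
    constructor
    · intro h v; exact h v.1 v.2
    · intro h v hv; exact h ⟨v, hv⟩
  simp only [cexp, ce, fsum, fm]
  rw [hfil]

end Bridge

end SRP


open SRP in
/-- **Near-full clue for a real function yields near-full clue for a nondegenerate Boolean
function** (key step of Corollary 5.2 of the paper). -/
theorem boolean_full_clue_of_full_clue
    {V : Type*} [Fintype V] [DecidableEq V]
    {Ω : Type*} [Fintype Ω] [DecidableEq Ω]
    (P : (V → Ω) → ℝ) (hP : IsPMF P)
    (ν : Finset V → ℝ) (hν : IsSubsetDist ν)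
    (ε : ℝ) (hε0 : 0 < ε) (hε1 : ε < 1)
    (hex : ∃ f : (V → Ω) → ℝ, 0 < pvar P f ∧ 1 - ε ^ 2 / 8 ≤ eClue P f ν) :
    ∃ E : Finset (V → Ω), 0 < ∑ σ ∈ E, P σ ∧ (∑ σ ∈ E, P σ) ≤ 1 / 2 ∧
      1 - ε ≤ eClue P (fun σ => if σ ∈ E then (1 : ℝ) else 0) ν := by
  classical
  obtain ⟨f, hv, hcl⟩ := hex
  obtain ⟨hp, h1⟩ := hP
  obtain ⟨hν0, hν1⟩ := hν
  obtain ⟨m, hm1, hm2⟩ := exists_median (f := f) hp h1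
  by_contra hcon
  push_neg at hcon
  -- notation
  set G : Finset ℝ := Finset.image f univ with hG
  have hfG : ∀ x : V → Ω, f x ∈ G := fun x => Finset.mem_image_of_mem f (mem_univ x)
  set w : ℝ → ℝ := wt G (phim m) with hwdef
  set EY : ℝ := ∑ x : V → Ω, P x * (f x - m)^2 with hEY
  have hEY0 : 0 ≤ EY := Finset.sum_nonneg fun x _ => mul_nonneg (hp x) (sq_nonneg _)
  set πf : (U : Finset V) → (V → Ω) → ({v // v ∈ U} → Ω) :=
    fun U ω v => ω v.1 with hπf
  set D : Finset V → ℝ → ℝ := fun U a =>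
    ∑ x : V → Ω, P x * (ce P (πf U) (indf f a) x * (1 - ce P (πf U) (indf f a) x)) with hD
  set W : Finset V → ℝ := fun U => ∑ x : V → Ω, P x * (f x - ce P (πf U) f x)^2 with hW
  have hW0 : ∀ U, 0 ≤ W U := fun U =>
    Finset.sum_nonneg fun x _ => mul_nonneg (hp x) (sq_nonneg _)
  -- indicator basics
  have hind01 : ∀ (a : ℝ) (x : V → Ω), 0 ≤ indf f a x ∧ indf f a x ≤ 1 := by
    intro a x
    rcases indf_mem_01 (f := f) a x with h | h <;> rw [h] <;> norm_num
  have hindsq : ∀ (a : ℝ) (x : V → Ω), indf f a x ^ 2 = indf f a x := by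
    intro a x
    rcases indf_mem_01 (f := f) a x with h | h <;> rw [h] <;> norm_num
  have hD0 : ∀ U a, 0 ≤ D U a := by
    intro U a
    refine Finset.sum_nonneg fun x _ => mul_nonneg (hp x) (mul_nonneg ?_ ?_)
    · exact ce_bool_nonneg hp _ (fun y => (hind01 a y).1) x
    · exact sub_nonneg.2 (ce_bool_le_one hp _ (fun y => (hind01 a y).2) x)
  -- hypothesis on f gives the budget bound
  have hclue_f : ∀ U : Finset V, clue P f U = (pvar P f - W U) / pvar P f := by
    intro U
    rw [clue, if_neg (ne_of_gt hv), cexp_eq_ce, pvar_ce_eq hp h1 (πf U) f]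
  have heClue_f : eClue P f ν = 1 - (∑ U : Finset V, ν U * W U) / pvar P f := by
    rw [eClue, Finset.sum_congr rfl fun U (_ : U ∈ univ) => by rw [hclue_f U]]
    have e : ∀ U ∈ (univ : Finset (Finset V)),
        ν U * ((pvar P f - W U) / pvar P f) = ν U - ν U * W U / pvar P f := by
      intro U _
      field_simp
    rw [Finset.sum_congr rfl e, Finset.sum_sub_distrib, hν1, ← Finset.sum_div]
  have hWsum : (∑ U : Finset V, ν U * W U) ≤ ε^2/8 * pvar P f := by
    rw [heClue_f] at hcl
    have h2 : (∑ U : Finset V, ν U * W U) / pvar P f ≤ ε^2/8 := by linarith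
    calc (∑ U : Finset V, ν U * W U)
        = (∑ U : Finset V, ν U * W U) / pvar P f * pvar P f := by field_simp
      _ ≤ ε^2/8 * pvar P f := mul_le_mul_of_nonneg_right h2 hv.le
  -- pointwise failure of thresholds
  have hkey : ∀ a ∈ G, 0 < pvar P (indf f a) →
      ε * pvar P (indf f a) < ∑ U : Finset V, ν U * D U a := by
    intro a _ hVa
    have hq_filter : pexp P (indf f a) = ∑ x ∈ univ.filter (fun x : V → Ω => a < f x), P x := by
      rw [pexp, Finset.sum_filter]
      refine Finset.sum_congr rfl fun x _ => ?_
      by_cases h : a < f x <;> simp [indf, h]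
    set q := pexp P (indf f a) with hq
    have hVq : pvar P (indf f a) = q * (1 - q) := pvar_indf h1 a
    have hq0 : 0 ≤ q := Finset.sum_nonneg fun x _ => mul_nonneg (hp x) (hind01 a x).1
    have hq1 : q ≤ 1 := by
      rw [← h1]
      exact Finset.sum_le_sum fun x _ => mul_le_of_le_one_right (hp x) (hind01 a x).2
    have hqpos : 0 < q := by
      rcases hq0.lt_or_eq with h | h
      · exact h
      · exfalso; rw [hVq, ← h] at hVa; simp at hVa
    have hqlt : q < 1 := by
      rcases hq1.lt_or_eq with h | h
      · exact h
      · exfalso; rw [hVq, h] at hVa; simp at hVa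
    -- clue of the threshold indicator
    have hclue_ind : ∀ U : Finset V, clue P (indf f a) U
        = (pvar P (indf f a) - D U a) / pvar P (indf f a) := by
      intro U
      rw [clue, if_neg (ne_of_gt hVa), cexp_eq_ce, pvar_ce_eq hp h1 (πf U) _,
        bool_ce_var hp _ (hindsq a)]
    have heClue_ind : eClue P (indf f a) ν
        = 1 - (∑ U : Finset V, ν U * D U a) / pvar P (indf f a) := by
      rw [eClue, Finset.sum_congr rfl fun U (_ : U ∈ univ) => by rw [hclue_ind U]]
      have e : ∀ U ∈ (univ : Finset (Finset V)),
          ν U * ((pvar P (indf f a) - D U a) / pvar P (indf f a))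
            = ν U - ν U * D U a / pvar P (indf f a) := by
        intro U _
        field_simp
      rw [Finset.sum_congr rfl e, Finset.sum_sub_distrib, hν1, ← Finset.sum_div]
    have hcompl : (∑ x ∈ univ.filter (fun x : V → Ω => ¬ a < f x), P x) = 1 - q := by
      have := Finset.sum_filter_add_sum_filter_not univ (fun x : V → Ω => a < f x) P
      rw [h1, ← hq_filter] at this
      linarith
    rcases le_or_gt m a with hma | hma
    · -- use the event {f > a}
      set E : Finset (V → Ω) := univ.filter (fun σ => a < f σ) with hEdef
      have hEP : (∑ σ ∈ E, P σ) = q := hq_filter.symm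
      have hindE : (fun σ => if σ ∈ E then (1:ℝ) else 0) = indf f a := by
        funext σ
        by_cases h : a < f σ <;> simp [hEdef, indf, h]
      have hhalf : (∑ σ ∈ E, P σ) ≤ 1/2 := by
        rw [hEP]
        have hsub : q ≤ ∑ x ∈ univ.filter (fun x : V → Ω => ¬ f x ≤ m), P x := by
          rw [hq_filter]
          refine Finset.sum_le_sum_of_subset_of_nonneg ?_ fun x _ _ => hp x
          intro x hx
          rw [mem_filter] at hx ⊢
          exact ⟨mem_univ x, not_le.2 (lt_of_le_of_lt hma hx.2)⟩
        have := Finset.sum_filter_add_sum_filter_not univ (fun x : V → Ω => f x ≤ m) P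
        rw [h1] at this
        linarith
      have hcon' := hcon E (by rw [hEP]; exact hqpos) hhalf
      rw [hindE, heClue_ind] at hcon'
      have hN : ε < (∑ U : Finset V, ν U * D U a) / pvar P (indf f a) := by linarith
      exact (lt_div_iff₀ hVa).1 hN
    · -- use the complementary event {f ≤ a}
      set E : Finset (V → Ω) := univ.filter (fun σ => f σ ≤ a) with hEdef
      have hfeq : univ.filter (fun x : V → Ω => ¬ a < f x) = E := by
        ext x; simp [hEdef, not_lt]
      have hEP : (∑ σ ∈ E, P σ) = 1 - q := by rw [← hfeq]; exact hcompl
      have hindE : (fun σ => if σ ∈ E then (1:ℝ) else 0)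
          = fun σ => 1 - indf f a σ := by
        funext σ
        by_cases h : a < f σ
        · rw [if_neg (by simp [hEdef, not_le.2 h])]
          simp only [indf]
          rw [if_pos h]
          norm_num
        · rw [if_pos (by simp [hEdef, not_lt.1 h])]
          simp only [indf]
          rw [if_neg h]
          norm_num
      have hhalf : (∑ σ ∈ E, P σ) ≤ 1/2 := by
        have hsub : (∑ σ ∈ E, P σ) ≤ ∑ x ∈ univ.filter (fun x : V → Ω => ¬ m ≤ f x), P x := by
          refine Finset.sum_le_sum_of_subset_of_nonneg ?_ fun x _ _ => hp x
          intro x hx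
          rw [hEdef, mem_filter] at hx
          rw [mem_filter]
          exact ⟨mem_univ x, not_le.2 (lt_of_le_of_lt hx.2 hma)⟩
        have := Finset.sum_filter_add_sum_filter_not univ (fun x : V → Ω => m ≤ f x) P
        rw [h1] at this
        linarith
      have hclue_eq : ∀ U : Finset V, clue P (fun σ => 1 - indf f a σ) U
          = clue P (indf f a) U := by
        intro U
        have hpv : pvar P (fun σ => 1 - indf f a σ) = pvar P (indf f a) :=
          pvar_const_sub h1 1 (indf f a)
        rw [clue, clue, hpv, cexp_eq_ce, cexp_eq_ce]
        have hcesupp : pvar P (ce P (πf U) (fun σ => 1 - indf f a σ))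
            = pvar P (ce P (πf U) (indf f a)) := by
          rw [pvar_congr_support (p := P) _ (fun x => 1 - ce P (πf U) (indf f a) x)
            (fun x hx => ce_one_sub hp _ hx), pvar_const_sub h1]
        rw [hcesupp]
      have heClue_eq : eClue P (fun σ => 1 - indf f a σ) ν = eClue P (indf f a) ν := by
        rw [eClue, eClue]
        exact Finset.sum_congr rfl fun U _ => by rw [hclue_eq U]
      have hcon' := hcon E (by rw [hEP]; linarith) hhalf
      rw [hindE, heClue_eq, heClue_ind] at hcon'
      have hN : ε < (∑ U : Finset V, ν U * D U a) / pvar P (indf f a) := by linarith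
      exact (lt_div_iff₀ hVa).1 hN
  -- weak version including degenerate thresholds
  have hweak : ∀ a ∈ G, ε * pvar P (indf f a) ≤ ∑ U : Finset V, ν U * D U a := by
    intro a haG
    rcases (pvar_nonneg hp (indf f a)).lt_or_eq with h | h
    · exact (hkey a haG h).le
    · rw [← h, mul_zero]
      exact Finset.sum_nonneg fun U _ => mul_nonneg (hν0 U) (hD0 U a)
  -- a strictly good index
  obtain ⟨x₁, x₂, hpx₁, hpx₂, hf12⟩ := exists_two_mass h1 hv
  have ha'G : f x₁ ∈ G := hfG x₁
  have hwa' : 0 < w (f x₁) := by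
    obtain ⟨hlt, -, -⟩ := na_gt (hfG x₂) hf12
    rw [hwdef, wt]
    exact sub_pos.2 (phim_strict m hlt)
  have hVa' : 0 < pvar P (indf f (f x₁)) := by
    have hp1 : 0 < P x₁ := lt_of_le_of_ne (hp x₁) (Ne.symm hpx₁)
    have hp2 : 0 < P x₂ := lt_of_le_of_ne (hp x₂) (Ne.symm hpx₂)
    have hq2 : P x₂ ≤ pexp P (indf f (f x₁)) := by
      have e : P x₂ * indf f (f x₁) x₂ = P x₂ := by
        simp only [indf]
        rw [if_pos hf12, mul_one]
      rw [pexp, ← e]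
      exact Finset.single_le_sum (f := fun x => P x * indf f (f x₁) x)
        (fun x _ => mul_nonneg (hp x) (hind01 _ x).1) (mem_univ x₂)
    have hq3 : pexp P (indf f (f x₁)) ≤ 1 - P x₁ := by
      have e0 : (∑ x : V → Ω, P x * (1 - indf f (f x₁) x)) = 1 - pexp P (indf f (f x₁)) := by
        rw [Finset.sum_congr rfl (fun x (_ : x ∈ univ) => by ring :
          ∀ x ∈ univ, P x * (1 - indf f (f x₁) x) = P x - P x * indf f (f x₁) x),
          Finset.sum_sub_distrib, h1, pexp]
      have e2 : P x₁ * (1 - indf f (f x₁) x₁) = P x₁ := by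
        simp only [indf]
        rw [if_neg (lt_irrefl _), sub_zero, mul_one]
      have e1 : P x₁ ≤ ∑ x : V → Ω, P x * (1 - indf f (f x₁) x) := by
        rw [← e2]
        exact Finset.single_le_sum (f := fun x => P x * (1 - indf f (f x₁) x))
          (fun x _ => mul_nonneg (hp x) (by linarith [(hind01 (f x₁) x).2])) (mem_univ x₁)
      linarith
    rw [pvar_indf h1]
    exact mul_pos (lt_of_lt_of_le hp2 hq2)
      (by linarith : (0:ℝ) < 1 - pexp P (indf f (f x₁)))
  -- summation with strict inequality
  have hsum_lt : (∑ a ∈ G, w a * (ε * pvar P (indf f a)))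
      < ∑ a ∈ G, w a * (∑ U : Finset V, ν U * D U a) := by
    refine Finset.sum_lt_sum
      (fun a haG => mul_le_mul_of_nonneg_left (hweak a haG) (wt_nonneg (phim m) (phim_mono m) a))
      ⟨f x₁, ha'G, mul_lt_mul_of_pos_left (hkey (f x₁) ha'G hVa') hwa'⟩
  -- lower bound for the left side
  have hlhs : ε * (EY / 2) ≤ ∑ a ∈ G, w a * (ε * pvar P (indf f a)) := by
    have e : (∑ a ∈ G, w a * (ε * pvar P (indf f a)))
        = ε * ∑ a ∈ G, w a * pvar P (indf f a) := by
      rw [Finset.mul_sum]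
      exact Finset.sum_congr rfl fun a _ => by ring
    rw [e]
    exact mul_le_mul_of_nonneg_left (sum_wt_Vq_ge hp h1 m hm1 hm2) hε0.le
  -- upper bound for the right side
  have hrhs : (∑ a ∈ G, w a * (∑ U : Finset V, ν U * D U a)) ≤ ε / 2 * EY := by
    have hswap : (∑ a ∈ G, w a * (∑ U : Finset V, ν U * D U a))
        = ∑ U : Finset V, ν U * ∑ a ∈ G, w a * D U a := by
      rw [Finset.sum_congr rfl fun a (_ : a ∈ G) => Finset.mul_sum _ _ _, Finset.sum_comm]
      refine Finset.sum_congr rfl fun U _ => ?_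
      rw [Finset.mul_sum]
      exact Finset.sum_congr rfl fun a _ => by ring
    rw [hswap]
    have hstep1 : ∀ U : Finset V, ν U * ∑ a ∈ G, w a * D U a
        ≤ ν U * (Real.sqrt 2 * (Real.sqrt (W U) * Real.sqrt EY)) := by
      intro U
      exact mul_le_mul_of_nonneg_left (sum_wt_D_le hp m (πf U)) (hν0 U)
    refine le_trans (Finset.sum_le_sum fun U _ => hstep1 U) ?_
    have e2 : (∑ U : Finset V, ν U * (Real.sqrt 2 * (Real.sqrt (W U) * Real.sqrt EY)))
        = Real.sqrt 2 * Real.sqrt EY * ∑ U : Finset V, ν U * Real.sqrt (W U) := by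
      rw [Finset.mul_sum]
      exact Finset.sum_congr rfl fun U _ => by ring
    rw [e2]
    have hCS : (∑ U : Finset V, ν U * Real.sqrt (W U))
        ≤ Real.sqrt (∑ U : Finset V, ν U * W U) := by
      have h2 := Finset.sum_mul_sq_le_sq_mul_sq univ (fun U => Real.sqrt (ν U))
        (fun U => Real.sqrt (ν U) * Real.sqrt (W U))
      have e3 : ∀ U ∈ (univ : Finset (Finset V)), Real.sqrt (ν U) * (Real.sqrt (ν U) * Real.sqrt (W U))
          = ν U * Real.sqrt (W U) := by
        intro U _
        rw [← mul_assoc, Real.mul_self_sqrt (hν0 U)]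
      have e4 : ∀ U ∈ (univ : Finset (Finset V)), Real.sqrt (ν U) ^ 2 = ν U :=
        fun U _ => Real.sq_sqrt (hν0 U)
      have e5 : ∀ U ∈ (univ : Finset (Finset V)), (Real.sqrt (ν U) * Real.sqrt (W U)) ^ 2
          = ν U * W U := by
        intro U _
        rw [mul_pow, Real.sq_sqrt (hν0 U), Real.sq_sqrt (hW0 U)]
      rw [Finset.sum_congr rfl e3, Finset.sum_congr rfl e4, Finset.sum_congr rfl e5, hν1,
        one_mul] at h2
      have hnn : 0 ≤ ∑ U : Finset V, ν U * Real.sqrt (W U) :=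
        Finset.sum_nonneg fun U _ => mul_nonneg (hν0 U) (Real.sqrt_nonneg _)
      calc (∑ U : Finset V, ν U * Real.sqrt (W U))
          = Real.sqrt ((∑ U : Finset V, ν U * Real.sqrt (W U))^2) := (Real.sqrt_sq hnn).symm
        _ ≤ Real.sqrt (∑ U : Finset V, ν U * W U) := Real.sqrt_le_sqrt h2
    have hfinal : Real.sqrt 2 * Real.sqrt EY * Real.sqrt (∑ U : Finset V, ν U * W U)
        ≤ ε / 2 * EY := by
      have hWEY : (∑ U : Finset V, ν U * W U) ≤ ε^2/8 * EY := by
        refine le_trans hWsum ?_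
        have := pvar_le_msq h1 f m
        nlinarith [sq_nonneg ε]
      have h6 : Real.sqrt (∑ U : Finset V, ν U * W U) ≤ Real.sqrt (ε^2/8 * EY) :=
        Real.sqrt_le_sqrt hWEY
      have h7 : Real.sqrt 2 * Real.sqrt (ε^2/8 * EY) = Real.sqrt (2 * (ε^2/8 * EY)) :=
        (Real.sqrt_mul (by norm_num) _).symm
      have h8 : (2 : ℝ) * (ε^2/8 * EY) = (ε/2)^2 * EY := by ring
      have h9 : Real.sqrt ((ε/2)^2 * EY) = ε/2 * Real.sqrt EY := by
        rw [Real.sqrt_mul (sq_nonneg _), Real.sqrt_sq (by linarith : (0:ℝ) ≤ ε/2)]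
      calc Real.sqrt 2 * Real.sqrt EY * Real.sqrt (∑ U : Finset V, ν U * W U)
          ≤ Real.sqrt 2 * Real.sqrt EY * Real.sqrt (ε^2/8 * EY) := by
            refine mul_le_mul_of_nonneg_left h6 (by positivity)
        _ = Real.sqrt EY * (Real.sqrt 2 * Real.sqrt (ε^2/8 * EY)) := by ring
        _ = Real.sqrt EY * (ε/2 * Real.sqrt EY) := by rw [h7, h8, h9]
        _ = ε/2 * (Real.sqrt EY * Real.sqrt EY) := by ring
        _ = ε/2 * EY := by rw [Real.mul_self_sqrt hEY0]
    calc Real.sqrt 2 * Real.sqrt EY * (∑ U : Finset V, ν U * Real.sqrt (W U))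
        ≤ Real.sqrt 2 * Real.sqrt EY * Real.sqrt (∑ U : Finset V, ν U * W U) := by
          refine mul_le_mul_of_nonneg_left hCS (by positivity)
      _ ≤ ε / 2 * EY := hfinal
  have : ε * (EY / 2) < ε / 2 * EY := lt_of_le_of_lt hlhs (lt_of_lt_of_le hsum_lt hrhs)
  linarith
end

section
/- Let G = (V,E) be a finite graph, ν a probability distribution on the subsets of E, and P the divide-and-color measure on {−1,1}^V induced by ν. Let M(σ) := (1/|V|)·Σ_{v∈V} σ_v be the average magnetization, and let ν' be a probability distribution of a random subset 𝒰 of V, independent of everything, with revealment δ. Then E[clue(M|𝒰)] ≤ δ · (Σ_{v∈V} E_ν[|C_v^𝒩|²]) / (Σ_{v∈V} E_ν[|C_v^𝒩|]), where E_ν denotes expectation over 𝒩 ∼ ν and |C_v^N| is the size of the cluster of v in (V,N). -/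
open Finset

namespace SR

open Finset

variable {V : Type*} [Fintype V] [DecidableEq V]

/-- `v` and `w` lie in the same cluster of the percolation configuration `N ⊆ E`. -/
def sameCluster (N : Finset (Sym2 V)) (v w : V) : Prop :=
  (SimpleGraph.fromEdgeSet (↑N : Set (Sym2 V))).Reachable v w

/-- The size `|C_v^N|` of the cluster of `v` in `(V, N)`. -/
noncomputable def clusterSize (N : Finset (Sym2 V)) (v : V) : ℕ :=
  Set.ncard {w : V | sameCluster N v w}

/-- The configuration `σ` is constant on every cluster of `(V, N)`. -/
def constOnClusters (N : Finset (Sym2 V)) (σ : V → Bool) : Prop :=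
  ∀ v w : V, sameCluster N v w → σ v = σ w

open scoped Classical in
/-- The uniform measure `P_N` on configurations that are constant on the clusters of `(V,N)`. -/
noncomputable def dacCond (N : Finset (Sym2 V)) : (V → Bool) → ℝ :=
  fun σ => if constOnClusters N σ
    then ((Set.ncard {τ : V → Bool | constOnClusters N τ} : ℝ))⁻¹ else 0

/-- The divide-and-color measure `P = Σ_N ν(N)·P_N` induced by an edge percolation `ν`. -/
noncomputable def dacPMF (ν : Finset (Sym2 V) → ℝ) : (V → Bool) → ℝ :=
  fun σ => ∑ N : Finset (Sym2 V), ν N * dacCond N σ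

end SR

/-!
Under `P_N` the clusters carry independent fair spins, so `E_N[σ_v σ_w] = 1{v ∼ w}` and
`Var(M) = |V|⁻² Σ_N ν(N) Σ_v |C_v^N|`. Given the spins on `U`, the `P_N`-conditional mean of
`σ_w` is the common spin of its cluster if that cluster meets `U`, and `0` otherwise; the second
moment of the resulting conditional magnetization is at most `|V|⁻² Σ_{u ∈ U} |C_u^N|²`.
Since `P` is the mixture `Σ_N ν(N) P_N`, Cauchy–Schwarz on each fibre of the restriction to `U`
bounds `E[E[M | F_U]²]` by the `ν`-average of these second moments, so
`clue(M | U) ≤ Σ_{u ∈ U} E_ν|C_u|² / Σ_v E_ν|C_v|`. Averaging over `𝒰`, each `u` is counted with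
weight `P[u ∈ 𝒰] ≤ δ`.
-/

namespace SR

section Moments

variable {X : Type*} [Fintype X] {p : X → ℝ}

theorem pvar_eq_sum_mul_sq_sub (hp : IsPMF p) (f : X → ℝ) :
    pvar p f = ∑ x, p x * f x ^ 2 - pexp p f ^ 2 := by
  have hexpand : ∀ x, p x * (f x - pexp p f) ^ 2
      = p x * f x ^ 2 - 2 * pexp p f * (p x * f x) + pexp p f ^ 2 * p x := fun x => by ring
  rw [pvar, sum_congr rfl fun x _ => hexpand x, sum_add_distrib, sum_sub_distrib, ← mul_sum,
    ← mul_sum, hp.2]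
  change _ - 2 * pexp p f * pexp p f + _ = _
  ring

theorem pvar_le_sum_mul_sq (hp : IsPMF p) (f : X → ℝ) : pvar p f ≤ ∑ x, p x * f x ^ 2 := by
  rw [pvar_eq_sum_mul_sq_sub hp]
  linarith [sq_nonneg (pexp p f)]

end Moments

section Fibers

variable {V Ω : Type*} [Fintype V] [DecidableEq V] [Fintype Ω] [DecidableEq Ω]

def fiber (U : Finset V) (ω : V → Ω) : Finset (V → Ω) :=
  univ.filter fun ω' => ∀ v ∈ U, ω' v = ω v

@[simp]
theorem mem_fiber {U : Finset V} {ω ω' : V → Ω} : ω' ∈ fiber U ω ↔ ∀ v ∈ U, ω' v = ω v := by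
  simp [fiber]

theorem fiber_eq_of_mem {U : Finset V} {ω ω' : V → Ω} (h : ω' ∈ fiber U ω) :
    fiber U ω' = fiber U ω := by
  ext τ
  simp only [mem_fiber] at h ⊢
  exact forall₂_congr fun v hv => by rw [h v hv]

theorem cexp_eq_div (p : (V → Ω) → ℝ) (U : Finset V) (f : (V → Ω) → ℝ) (ω : V → Ω) :
    cexp p U f ω = (∑ ω' ∈ fiber U ω, p ω' * f ω') / ∑ ω' ∈ fiber U ω, p ω' :=
  rfl

theorem cexp_eq_of_mem_fiber (p : (V → Ω) → ℝ) {U : Finset V} (f : (V → Ω) → ℝ)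
    {ω ω' : V → Ω} (h : ω' ∈ fiber U ω) : cexp p U f ω' = cexp p U f ω := by
  rw [cexp_eq_div, cexp_eq_div, fiber_eq_of_mem h]

theorem sum_le_sum_of_sum_fiber_le {F G : (V → Ω) → ℝ} (U : Finset V)
    (h : ∀ ω, ∑ ω' ∈ fiber U ω, F ω' ≤ ∑ ω' ∈ fiber U ω, G ω') : ∑ ω, F ω ≤ ∑ ω, G ω := by
  rw [← sum_fiberwise univ U.restrict F, ← sum_fiberwise univ U.restrict G]
  refine sum_le_sum fun η _ => ?_
  obtain hη | ⟨ω, hω⟩ := (univ.filter fun ω : V → Ω => U.restrict ω = η).eq_empty_or_nonempty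
  · simp [hη]
  · have hfiber : (univ.filter fun ω' : V → Ω => U.restrict ω' = η) = fiber U ω := by
      ext ω'
      simp [← (mem_filter.1 hω).2, funext_iff]
    rw [hfiber]
    exact h ω

theorem clue_le_div {p f : (V → Ω) → ℝ} {U : Finset V} {k A B : ℝ} (hk : 0 ≤ k) (hA : 0 ≤ A)
    (hB : 0 ≤ B) (hnum : pvar p (cexp p U f) ≤ k * A) (hden : pvar p f = k * B) :
    clue p f U ≤ A / B := by
  unfold clue
  split_ifs with hzero
  · positivity
  · have hkB : 0 < k * B := lt_of_le_of_ne (mul_nonneg hk hB) (hden ▸ Ne.symm hzero)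
    have hk0 : k ≠ 0 := fun h => by simp [h] at hkB
    calc pvar p (cexp p U f) / pvar p f ≤ k * A / (k * B) := by
          rw [hden]
          exact div_le_div_of_nonneg_right hnum hkB.le
      _ = A / B := mul_div_mul_left A B hk0

end Fibers

/-- Jensen's inequality for the square, with unnormalized weights. -/
theorem sum_mul_div_sum_sq_le {ι : Type*} (s : Finset ι) {w : ι → ℝ} (hw : ∀ i ∈ s, 0 ≤ w i)
    (g : ι → ℝ) :
    (∑ i ∈ s, w i) * ((∑ i ∈ s, w i * g i) / ∑ i ∈ s, w i) ^ 2 ≤ ∑ i ∈ s, w i * g i ^ 2 := by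
  have hcs : (∑ i ∈ s, w i * g i) ^ 2 ≤ (∑ i ∈ s, w i) * ∑ i ∈ s, w i * g i ^ 2 :=
    sum_sq_le_sum_mul_sum_of_sq_le_mul s hw (fun i hi => mul_nonneg (hw i hi) (sq_nonneg _))
      fun i _ => le_of_eq (by ring)
  obtain hzero | hpos := (sum_nonneg hw).eq_or_lt
  · rw [← hzero, zero_mul]
    exact sum_nonneg fun i hi => mul_nonneg (hw i hi) (sq_nonneg _)
  · rw [div_pow, mul_div_assoc', pow_two (∑ i ∈ s, w i), ← div_div, mul_div_cancel_left₀ _ hpos.ne',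
      div_le_iff₀ hpos]
    linarith

section Mixture

variable {V Ω ι : Type*} [Fintype V] [DecidableEq V] [Fintype Ω] [DecidableEq Ω] [Fintype ι]

/-- Conditional Jensen for a mixture `p = Σ_i ν_i q_i`: `E_p[E_p[f | F_U]²]` is at most the
`ν`-average of `E_{q_i}[g_i²]`, where `g_i` is any `F_U`-measurable version of
`E_{q_i}[f | F_U]`. -/
theorem sum_mul_cexp_sq_le_of_mixture {p : (V → Ω) → ℝ} {ν : ι → ℝ} {q : ι → (V → Ω) → ℝ}
    (hp : ∀ ω, p ω = ∑ i, ν i * q i ω) (hν : ∀ i, 0 ≤ ν i) (hq : ∀ i ω, 0 ≤ q i ω)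
    (U : Finset V) (f : (V → Ω) → ℝ) (g : ι → (V → Ω) → ℝ)
    (hg_fiber : ∀ i {ω ω'}, ω' ∈ fiber U ω → g i ω' = g i ω)
    (hg : ∀ i ω, ∑ ω' ∈ fiber U ω, q i ω' * f ω' = (∑ ω' ∈ fiber U ω, q i ω') * g i ω) :
    ∑ ω, p ω * cexp p U f ω ^ 2 ≤ ∑ i, ν i * ∑ ω, q i ω * g i ω ^ 2 := by
  simp_rw [mul_sum]
  rw [sum_comm]
  refine sum_le_sum_of_sum_fiber_le U fun ω => ?_
  set w : ι → ℝ := fun i => ν i * ∑ ω' ∈ fiber U ω, q i ω'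
  have hmass : ∑ ω' ∈ fiber U ω, p ω' = ∑ i, w i := by
    simp_rw [hp, w, mul_sum]
    exact sum_comm
  have hmoment : ∑ ω' ∈ fiber U ω, p ω' * f ω' = ∑ i, w i * g i ω := by
    simp_rw [hp, sum_mul, w, mul_assoc, ← hg, mul_sum]
    exact sum_comm
  calc ∑ ω' ∈ fiber U ω, p ω' * cexp p U f ω' ^ 2
      = (∑ ω' ∈ fiber U ω, p ω') * cexp p U f ω ^ 2 := by
        rw [sum_mul]
        exact sum_congr rfl fun ω' h => by rw [cexp_eq_of_mem_fiber p f h]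
    _ = (∑ i, w i) * ((∑ i, w i * g i ω) / ∑ i, w i) ^ 2 := by
        rw [cexp_eq_div, hmoment, hmass]
    _ ≤ ∑ i, w i * g i ω ^ 2 :=
        sum_mul_div_sum_sq_le _ (fun i _ => mul_nonneg (hν i) (sum_nonneg fun _ _ => hq i _)) _
    _ = ∑ ω' ∈ fiber U ω, ∑ i, ν i * (q i ω' * g i ω' ^ 2) := by
        rw [sum_comm]
        refine sum_congr rfl fun i _ => ?_
        simp only [w, mul_assoc, sum_mul, mul_sum]
        exact sum_congr rfl fun ω' h => by rw [hg_fiber i h]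

end Mixture

theorem spinR_not (b : Bool) : spinR (!b) = -spinR b := by
  cases b <;> simp [spinR]

theorem spinR_mul_self (b : Bool) : spinR b * spinR b = 1 := by
  cases b <;> simp [spinR]

noncomputable def magnetization {V : Type*} [Fintype V] (σ : V → Bool) : ℝ :=
  (Fintype.card V : ℝ)⁻¹ * ∑ v, spinR (σ v)

section DivideAndColor

open scoped Classical

variable {V : Type*} (N : Finset (Sym2 V))

noncomputable def flipCluster (x : V) (ω : V → Bool) : V → Bool :=
  fun v => if sameCluster N x v then !ω v else ω v

variable {N}

theorem sameCluster.symm {v w : V} (h : sameCluster N v w) : sameCluster N w v :=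
  SimpleGraph.Reachable.symm h

theorem sameCluster.trans {u v w : V} (huv : sameCluster N u v) (hvw : sameCluster N v w) :
    sameCluster N u w :=
  SimpleGraph.Reachable.trans huv hvw

theorem flipCluster_flipCluster (x : V) (ω : V → Bool) :
    flipCluster N x (flipCluster N x ω) = ω := by
  funext v
  by_cases h : sameCluster N x v <;> simp [flipCluster, h]

theorem flipCluster_apply_self (x : V) (ω : V → Bool) : flipCluster N x ω x = !ω x :=
  if_pos (SimpleGraph.Reachable.refl x)

theorem flipCluster_apply_of_not {x v : V} (ω : V → Bool) (h : ¬sameCluster N x v) :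
    flipCluster N x ω v = ω v := by
  simp [flipCluster, h]

theorem constOnClusters_flipCluster {x : V} {ω : V → Bool} (h : constOnClusters N ω) :
    constOnClusters N (flipCluster N x ω) := by
  intro v w hvw
  have hx : sameCluster N x v ↔ sameCluster N x w :=
    ⟨fun hxv => hxv.trans hvw, fun hxw => hxw.trans hvw.symm⟩
  by_cases hxv : sameCluster N x v
  · simp [flipCluster, hxv, hx.1 hxv, h v w hvw]
  · simp [flipCluster, hxv, mt hx.2 hxv, h v w hvw]

theorem dacCond_flipCluster (x : V) (ω : V → Bool) :
    dacCond N (flipCluster N x ω) = dacCond N ω := by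
  have hiff : constOnClusters N (flipCluster N x ω) ↔ constOnClusters N ω :=
    ⟨fun h => flipCluster_flipCluster x ω ▸ constOnClusters_flipCluster h,
      constOnClusters_flipCluster⟩
  simp only [dacCond, hiff]

theorem sum_eq_zero_of_flipCluster (N : Finset (Sym2 V)) (x : V) {s : Finset (V → Bool)}
    (hs : ∀ ω ∈ s, flipCluster N x ω ∈ s) {F : (V → Bool) → ℝ}
    (hF : ∀ ω ∈ s, F (flipCluster N x ω) = -F ω) : ∑ ω ∈ s, F ω = 0 := by
  refine sum_involution (fun ω _ => flipCluster N x ω) (fun ω hω => by rw [hF ω hω]; ring)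
    (fun ω _ _ h => ?_) hs (fun ω _ => flipCluster_flipCluster x ω)
  have := congrFun h x
  rw [flipCluster_apply_self] at this
  exact Bool.not_ne_self _ this

theorem dacCond_nonneg (ω : V → Bool) : 0 ≤ dacCond N ω := by
  unfold dacCond
  split_ifs <;> positivity

theorem dacCond_mul_congr {ω : V → Bool} {a b : ℝ} (h : constOnClusters N ω → a = b) :
    dacCond N ω * a = dacCond N ω * b := by
  by_cases hω : constOnClusters N ω
  · rw [h hω]
  · simp [dacCond, hω]

variable (N)

/-- Equals `0 / 0 = 0` when the cluster of `w` misses `U`. -/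
noncomputable def clusterSpinMean (U : Finset V) (ω : V → Bool) (w : V) : ℝ :=
  (∑ u ∈ U.filter (sameCluster N · w), spinR (ω u)) / #(U.filter (sameCluster N · w))

variable [Fintype V]

theorem clusterSize_eq_card (v : V) : clusterSize N v = #(univ.filter (sameCluster N v)) := by
  rw [clusterSize, Set.ncard_eq_toFinset_card']
  congr 1
  ext w
  simp

noncomputable def clusterClosure (U : Finset V) : Finset V :=
  univ.filter fun w => ∃ u ∈ U, sameCluster N u w

/-- A version of `E_N[M | F_U]`. -/
noncomputable def condMagnetization (U : Finset V) (ω : V → Bool) : ℝ :=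
  (Fintype.card V : ℝ)⁻¹ * ∑ w, clusterSpinMean N U ω w

variable {N}

theorem clusterSize_eq_of_sameCluster {u v : V} (h : sameCluster N u v) :
    clusterSize N v = clusterSize N u := by
  simp only [clusterSize_eq_card]
  congr 1
  ext w
  simp only [mem_filter, mem_univ, true_and]
  exact ⟨h.trans, h.symm.trans⟩

theorem clusterSpinMean_eq_zero {U : Finset V} {w : V} (ω : V → Bool)
    (h : w ∉ clusterClosure N U) : clusterSpinMean N U ω w = 0 := by
  have hempty : U.filter (sameCluster N · w) = ∅ :=
    filter_eq_empty_iff.2 fun u hu huw => h (by simp only [clusterClosure, mem_filter]; exact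
      ⟨mem_univ _, u, hu, huw⟩)
  simp [clusterSpinMean, hempty]

theorem clusterSpinMean_eq {U : Finset V} {w : V} {ω : V → Bool} {c : ℝ}
    (hw : w ∈ clusterClosure N U) (h : ∀ u ∈ U, sameCluster N u w → spinR (ω u) = c) :
    clusterSpinMean N U ω w = c := by
  obtain ⟨u, hu, huw⟩ := (mem_filter.1 hw).2
  have hcard : (#(U.filter (sameCluster N · w)) : ℝ) ≠ 0 :=
    Nat.cast_ne_zero.2 (card_ne_zero.2 ⟨u, mem_filter.2 ⟨hu, huw⟩⟩)
  rw [clusterSpinMean, sum_congr rfl fun u hu => h u (mem_filter.1 hu).1 (mem_filter.1 hu).2,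
    sum_const, nsmul_eq_mul, mul_div_cancel_left₀ _ hcard]

theorem clusterSpinMean_of_constOnClusters (U : Finset V) {ω : V → Bool}
    (hω : constOnClusters N ω) (w : V) :
    clusterSpinMean N U ω w = if w ∈ clusterClosure N U then spinR (ω w) else 0 := by
  split_ifs with hw
  · exact clusterSpinMean_eq hw fun u _ huw => by rw [hω u w huw]
  · exact clusterSpinMean_eq_zero ω hw

theorem sum_clusterSize_clusterClosure_le (U : Finset V) :
    ∑ v ∈ clusterClosure N U, clusterSize N v ≤ ∑ u ∈ U, clusterSize N u ^ 2 := by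
  calc ∑ v ∈ clusterClosure N U, clusterSize N v
      ≤ ∑ v ∈ clusterClosure N U, ∑ _u ∈ U.filter (sameCluster N · v), clusterSize N v := by
        refine sum_le_sum fun v hv => ?_
        obtain ⟨u, hu, huv⟩ := (mem_filter.1 hv).2
        rw [sum_const, smul_eq_mul]
        exact Nat.le_mul_of_pos_left _ (card_pos.2 ⟨u, mem_filter.2 ⟨hu, huv⟩⟩)
    _ ≤ ∑ v, ∑ _u ∈ U.filter (sameCluster N · v), clusterSize N v :=
        sum_le_sum_of_subset (subset_univ _)
    _ = ∑ u ∈ U, ∑ v ∈ univ.filter (sameCluster N u), clusterSize N v :=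
        sum_comm' fun v u => by simp [and_comm]
    _ = ∑ u ∈ U, clusterSize N u ^ 2 := by
        refine sum_congr rfl fun u _ => ?_
        rw [sum_congr rfl fun v hv => clusterSize_eq_of_sameCluster (mem_filter.1 hv).2,
          sum_const, smul_eq_mul, ← clusterSize_eq_card, sq]

variable (N) [DecidableEq V]

theorem sum_dacCond : ∑ ω, dacCond N ω = 1 := by
  have hset : {τ : V → Bool | constOnClusters N τ} = ↑(univ.filter (constOnClusters N)) := by
    ext
    simp
  have hpos : 0 < #(univ.filter (constOnClusters N)) :=
    card_pos.2 ⟨fun _ => false, by simp [constOnClusters]⟩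
  simp only [dacCond, hset, Set.ncard_coe_finset, sum_ite, sum_const_zero, add_zero, sum_const,
    nsmul_eq_mul]
  exact mul_inv_cancel₀ (by positivity)

theorem sum_dacCond_mul_spinR (v : V) : ∑ ω, dacCond N ω * spinR (ω v) = 0 :=
  sum_eq_zero_of_flipCluster N v (fun _ _ => mem_univ _) fun ω _ => by
    rw [dacCond_flipCluster, flipCluster_apply_self, spinR_not, mul_neg]

theorem sum_dacCond_mul_spinR_mul_spinR (v w : V) :
    ∑ ω, dacCond N ω * (spinR (ω v) * spinR (ω w)) = if sameCluster N v w then 1 else 0 := by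
  split_ifs with h
  · rw [← sum_dacCond N]
    refine sum_congr rfl fun ω _ => ?_
    rw [dacCond_mul_congr (b := 1) fun hω => by rw [hω v w h, spinR_mul_self], mul_one]
  · refine sum_eq_zero_of_flipCluster N v (fun _ _ => mem_univ _) fun ω _ => ?_
    rw [dacCond_flipCluster, flipCluster_apply_self, flipCluster_apply_of_not ω h, spinR_not]
    ring

theorem sum_dacCond_mul_sum_spinR_sq (T : Finset V) :
    ∑ ω, dacCond N ω * (∑ w ∈ T, spinR (ω w)) ^ 2
      = ∑ v ∈ T, (#(T.filter (sameCluster N v)) : ℝ) := by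
  simp_rw [sq, sum_mul_sum, mul_sum]
  rw [sum_comm]
  refine sum_congr rfl fun v _ => ?_
  rw [sum_comm]
  simp_rw [sum_dacCond_mul_spinR_mul_spinR, sum_boole]

theorem sum_dacCond_mul_magnetization : ∑ ω, dacCond N ω * magnetization ω = 0 := by
  calc ∑ ω, dacCond N ω * magnetization ω
      = (Fintype.card V : ℝ)⁻¹ * ∑ v, ∑ ω, dacCond N ω * spinR (ω v) := by
        simp only [magnetization, mul_sum]
        rw [sum_comm]
        exact sum_congr rfl fun _ _ => sum_congr rfl fun _ _ => by ring
    _ = 0 := by simp [sum_dacCond_mul_spinR]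

theorem sum_dacCond_mul_magnetization_sq :
    ∑ ω, dacCond N ω * magnetization ω ^ 2
      = (Fintype.card V : ℝ)⁻¹ ^ 2 * ∑ v, (clusterSize N v : ℝ) := by
  simp only [magnetization, mul_pow, mul_left_comm (dacCond N _)]
  rw [← mul_sum, sum_dacCond_mul_sum_spinR_sq]
  simp [clusterSize_eq_card]

variable {N}

theorem sum_fiber_dacCond_mul_spinR (U : Finset V) (ω : V → Bool) (w : V) :
    ∑ ω' ∈ fiber U ω, dacCond N ω' * spinR (ω' w)
      = (∑ ω' ∈ fiber U ω, dacCond N ω') * clusterSpinMean N U ω w := by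
  by_cases hw : w ∈ clusterClosure N U
  · rw [sum_mul]
    refine sum_congr rfl fun ω' hω' => dacCond_mul_congr fun hconst => ?_
    refine (clusterSpinMean_eq hw fun u hu huw => ?_).symm
    rw [← mem_fiber.1 hω' u hu, hconst u w huw]
  · rw [clusterSpinMean_eq_zero ω hw, mul_zero]
    have hfar : ∀ u ∈ U, ¬sameCluster N w u := fun u hu hwu =>
      hw (mem_filter.2 ⟨mem_univ _, u, hu, hwu.symm⟩)
    refine sum_eq_zero_of_flipCluster N w (fun ω' hω' => ?_) fun ω' _ => ?_
    · exact mem_fiber.2 fun u hu => by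
        rw [flipCluster_apply_of_not ω' (hfar u hu), mem_fiber.1 hω' u hu]
    · rw [dacCond_flipCluster, flipCluster_apply_self, spinR_not, mul_neg]

theorem sum_fiber_dacCond_mul_magnetization (U : Finset V) (ω : V → Bool) :
    ∑ ω' ∈ fiber U ω, dacCond N ω' * magnetization ω'
      = (∑ ω' ∈ fiber U ω, dacCond N ω') * condMagnetization N U ω := by
  calc ∑ ω' ∈ fiber U ω, dacCond N ω' * magnetization ω'
      = (Fintype.card V : ℝ)⁻¹ * ∑ w, ∑ ω' ∈ fiber U ω, dacCond N ω' * spinR (ω' w) := by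
        simp only [magnetization, mul_sum]
        rw [sum_comm]
        exact sum_congr rfl fun w _ => sum_congr rfl fun ω' _ => by ring
    _ = (∑ ω' ∈ fiber U ω, dacCond N ω') * condMagnetization N U ω := by
        simp only [sum_fiber_dacCond_mul_spinR, condMagnetization, mul_sum]
        exact sum_congr rfl fun w _ => by ring

theorem condMagnetization_eq_of_mem_fiber {U : Finset V} {ω ω' : V → Bool}
    (h : ω' ∈ fiber U ω) : condMagnetization N U ω' = condMagnetization N U ω := by
  simp only [condMagnetization, clusterSpinMean]
  congr 2
  refine funext fun w => congrArg₂ _ (sum_congr rfl fun u hu => ?_) rfl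
  rw [mem_fiber.1 h u (mem_filter.1 hu).1]

theorem sum_dacCond_mul_condMagnetization_sq_le (U : Finset V) :
    ∑ ω, dacCond N ω * condMagnetization N U ω ^ 2
      ≤ (Fintype.card V : ℝ)⁻¹ ^ 2 * ∑ u ∈ U, (clusterSize N u : ℝ) ^ 2 := by
  set T := clusterClosure N U
  have hrestrict : ∀ ω, constOnClusters N ω →
      condMagnetization N U ω = (Fintype.card V : ℝ)⁻¹ * ∑ w ∈ T, spinR (ω w) := fun ω hω => by
    simp only [condMagnetization, clusterSpinMean_of_constOnClusters U hω, sum_ite_mem,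
      univ_inter, T]
  calc ∑ ω, dacCond N ω * condMagnetization N U ω ^ 2
      = (Fintype.card V : ℝ)⁻¹ ^ 2 * ∑ ω, dacCond N ω * (∑ w ∈ T, spinR (ω w)) ^ 2 := by
        rw [mul_sum]
        refine sum_congr rfl fun ω _ => ?_
        rw [dacCond_mul_congr fun hω => by rw [hrestrict ω hω]]
        ring
    _ = (Fintype.card V : ℝ)⁻¹ ^ 2 * ∑ v ∈ T, (#(T.filter (sameCluster N v)) : ℝ) := by
        rw [sum_dacCond_mul_sum_spinR_sq]
    _ ≤ (Fintype.card V : ℝ)⁻¹ ^ 2 * ∑ u ∈ U, (clusterSize N u : ℝ) ^ 2 := by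
        gcongr
        calc ∑ v ∈ T, (#(T.filter (sameCluster N v)) : ℝ)
            ≤ ∑ v ∈ T, (clusterSize N v : ℝ) := by
              gcongr with v
              rw [clusterSize_eq_card]
              exact card_le_card (filter_subset_filter _ (subset_univ _))
          _ ≤ ∑ u ∈ U, (clusterSize N u : ℝ) ^ 2 := by
              exact_mod_cast sum_clusterSize_clusterClosure_le U

end DivideAndColor

section Clue

variable {V : Type*} [Fintype V] [DecidableEq V] {ν : Finset (Sym2 V) → ℝ}

theorem sum_dacPMF_mul (F : (V → Bool) → ℝ) :
    ∑ ω, dacPMF ν ω * F ω = ∑ N, ν N * ∑ ω, dacCond N ω * F ω := by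
  simp only [dacPMF, sum_mul, mul_sum, mul_assoc]
  exact sum_comm

theorem isPMF_dacPMF (hν0 : ∀ N, 0 ≤ ν N) (hν1 : ∑ N, ν N = 1) : IsPMF (dacPMF ν) := by
  refine ⟨fun ω => sum_nonneg fun N _ => mul_nonneg (hν0 N) (dacCond_nonneg ω), ?_⟩
  simpa [sum_dacCond, hν1] using sum_dacPMF_mul (ν := ν) fun _ => 1

theorem pvar_magnetization (hν0 : ∀ N, 0 ≤ ν N) (hν1 : ∑ N, ν N = 1) :
    pvar (dacPMF ν) magnetization
      = (Fintype.card V : ℝ)⁻¹ ^ 2 * ∑ v, ∑ N, ν N * (clusterSize N v : ℝ) := by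
  have hmean : pexp (dacPMF ν) magnetization = 0 := by
    simp [pexp, sum_dacPMF_mul, sum_dacCond_mul_magnetization]
  rw [pvar_eq_sum_mul_sq_sub (isPMF_dacPMF hν0 hν1), hmean, zero_pow two_ne_zero, sub_zero,
    sum_dacPMF_mul]
  simp only [sum_dacCond_mul_magnetization_sq, mul_sum]
  rw [sum_comm]
  exact sum_congr rfl fun _ _ => sum_congr rfl fun _ _ => by ring

theorem clue_magnetization_le (hν0 : ∀ N, 0 ≤ ν N) (hν1 : ∑ N, ν N = 1) (U : Finset V) :
    clue (dacPMF ν) magnetization U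
      ≤ (∑ u ∈ U, ∑ N, ν N * (clusterSize N u : ℝ) ^ 2) /
        ∑ v, ∑ N, ν N * (clusterSize N v : ℝ) := by
  have hp := isPMF_dacPMF hν0 hν1
  refine clue_le_div (sq_nonneg _) (sum_nonneg fun u _ => sum_nonneg fun N _ =>
      mul_nonneg (hν0 N) (sq_nonneg _))
    (sum_nonneg fun v _ => sum_nonneg fun N _ => mul_nonneg (hν0 N) (Nat.cast_nonneg _)) ?_
    (pvar_magnetization hν0 hν1)
  calc pvar (dacPMF ν) (cexp (dacPMF ν) U magnetization)
      ≤ ∑ ω, dacPMF ν ω * cexp (dacPMF ν) U magnetization ω ^ 2 := pvar_le_sum_mul_sq hp _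
    _ ≤ ∑ N, ν N * ∑ ω, dacCond N ω * condMagnetization N U ω ^ 2 :=
        sum_mul_cexp_sq_le_of_mixture (fun _ => rfl) hν0 (fun N => dacCond_nonneg) U _ _
          (fun _ _ _ => condMagnetization_eq_of_mem_fiber)
          fun _ => sum_fiber_dacCond_mul_magnetization U
    _ ≤ ∑ N, ν N * ((Fintype.card V : ℝ)⁻¹ ^ 2 * ∑ u ∈ U, (clusterSize N u : ℝ) ^ 2) :=
        sum_le_sum fun N _ => mul_le_mul_of_nonneg_left
          (sum_dacCond_mul_condMagnetization_sq_le U) (hν0 N)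
    _ = (Fintype.card V : ℝ)⁻¹ ^ 2 * ∑ u ∈ U, ∑ N, ν N * (clusterSize N u : ℝ) ^ 2 := by
        simp only [mul_sum, mul_left_comm (ν _)]
        exact sum_comm

end Clue

theorem sum_mul_sum_le_of_revealment_le {V : Type*} [Fintype V] [DecidableEq V]
    {ν' : Finset V → ℝ} {δ : ℝ}
    (hδ : ∀ v, ∑ S ∈ univ.filter (fun S : Finset V => v ∈ S), ν' S ≤ δ) {a : V → ℝ}
    (ha : ∀ v, 0 ≤ a v) : ∑ S, ν' S * ∑ u ∈ S, a u ≤ δ * ∑ v, a v := by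
  calc ∑ S, ν' S * ∑ u ∈ S, a u
      = ∑ v, (∑ S ∈ univ.filter (fun S : Finset V => v ∈ S), ν' S) * a v := by
        simp only [mul_sum, sum_mul]
        exact sum_comm' fun S v => by simp
    _ ≤ δ * ∑ v, a v := by
        rw [mul_sum]
        exact sum_le_sum fun v _ => mul_le_mul_of_nonneg_right (hδ v) (ha v)

end SR

open Finset SR

theorem dac_clue_magnetization_general
    {V : Type*} [Fintype V] [DecidableEq V]
    (ν : Finset (Sym2 V) → ℝ)
    (hν0 : ∀ N, 0 ≤ ν N) (hν1 : ∑ N : Finset (Sym2 V), ν N = 1)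
    (ν' : Finset V → ℝ) (hν' : IsSubsetDist ν')
    (δ : ℝ)
    (hδ : ∀ v : V, ∑ S ∈ univ.filter (fun S : Finset V => v ∈ S), ν' S ≤ δ) :
    eClue (dacPMF ν) (fun σ => (Fintype.card V : ℝ)⁻¹ * ∑ v : V, spinR (σ v)) ν'
      ≤ δ * ((∑ v : V, ∑ N : Finset (Sym2 V), ν N * (clusterSize N v : ℝ) ^ 2) /
             (∑ v : V, ∑ N : Finset (Sym2 V), ν N * (clusterSize N v : ℝ))) := by
  set D := ∑ v : V, ∑ N : Finset (Sym2 V), ν N * (clusterSize N v : ℝ)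
  have hD : 0 ≤ D := sum_nonneg fun v _ => sum_nonneg fun N _ => mul_nonneg (hν0 N) (by positivity)
  calc eClue (dacPMF ν) magnetization ν'
      ≤ ∑ S, ν' S * ((∑ u ∈ S, ∑ N, ν N * (clusterSize N u : ℝ) ^ 2) / D) :=
        sum_le_sum fun S _ => mul_le_mul_of_nonneg_left (clue_magnetization_le hν0 hν1 S) (hν'.1 S)
    _ = (∑ S, ν' S * ∑ u ∈ S, ∑ N, ν N * (clusterSize N u : ℝ) ^ 2) / D := by
        simp only [sum_div, mul_div_assoc]
    _ ≤ (δ * ∑ v, ∑ N, ν N * (clusterSize N v : ℝ) ^ 2) / D :=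
        div_le_div_of_nonneg_right (sum_mul_sum_le_of_revealment_le hδ fun v =>
          sum_nonneg fun N _ => mul_nonneg (hν0 N) (sq_nonneg _)) hD
    _ = _ := mul_div_assoc _ _ _

/-- **Clue bound for the magnetization of divide-and-color measures**
(Proposition 6.3 of the paper):
`E[clue(M|𝒰)] ≤ δ · (Σ_v E_ν[|C_v|²]) / (Σ_v E_ν[|C_v|])`. -/
theorem dac_clue_magnetization
    {V : Type*} [Fintype V] [DecidableEq V]
    (G : SimpleGraph V) [DecidableRel G.Adj]
    (ν : Finset (Sym2 V) → ℝ)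
    (hν0 : ∀ N, 0 ≤ ν N) (hν1 : ∑ N : Finset (Sym2 V), ν N = 1)
    (hνsupp : ∀ N : Finset (Sym2 V), ν N ≠ 0 → N ⊆ G.edgeFinset)
    (ν' : Finset V → ℝ) (hν' : IsSubsetDist ν')
    (δ : ℝ)
    (hδ : ∀ v : V, ∑ S ∈ univ.filter (fun S : Finset V => v ∈ S), ν' S ≤ δ) :
    eClue (dacPMF ν) (fun σ => (Fintype.card V : ℝ)⁻¹ * ∑ v : V, spinR (σ v)) ν'
      ≤ δ * ((∑ v : V, ∑ N : Finset (Sym2 V), ν N * (clusterSize N v : ℝ) ^ 2) /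
             (∑ v : V, ∑ N : Finset (Sym2 V), ν N * (clusterSize N v : ℝ))) :=
  dac_clue_magnetization_general ν hν0 hν1 ν' hν' δ hδ
end
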